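/- arXiv:1510.06463 — 5 statements merged into one kernel-verified Lean document; each statement's English description precedes it below -/
import Mathlib

section
/- For all f, g ∈ Δ, Q_f(y*_{g,β}) − Q_f(y*_{f,β}) ≤ 4·max(h,b)·d̄·δ_V(f,g). -/
open Finset

noncomputable section

/-- `f` is a demand distribution on `{0, 1, ..., dbar}`. -/
def IsDist (dbar : ℕ) (f : ℕ → ℝ) : Prop :=
  (∀ d, 0 ≤ f d) ∧ (∀ d, dbar < d → f d = 0) ∧ ∑ d ∈ Finset.range (dbar + 1), f d = 1

/-- The cdf `F_f(d) = Σ_{d'=0}^{d} f(d')`. -/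
def cdf (f : ℕ → ℝ) (d : ℕ) : ℝ := ∑ i ∈ Finset.range (d + 1), f i

/-- `F_f(d-1)`, with the convention `F_f(-1) = 0`. -/
def cdfm1 (f : ℕ → ℝ) (d : ℕ) : ℝ := ∑ i ∈ Finset.range d, f i

/-- The one-period expected cost under order-up-to level `y`. -/
def Q (h b : ℝ) (dbar : ℕ) (f : ℕ → ℝ) (y : ℕ) : ℝ :=
  ∑ d ∈ Finset.range (dbar + 1),
    f d * (h * max ((y : ℝ) - (d : ℝ)) 0 + b * max ((d : ℝ) - (y : ℝ)) 0)

/-- The minimum one-period expected cost. -/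
def Qstar (h b : ℝ) (dbar : ℕ) (f : ℕ → ℝ) : ℝ :=
  (Finset.range (dbar + 1)).inf' Finset.nonempty_range_add_one (Q h b dbar f)

/-- The newsvendor quantile `y*_{f,β} = min {d ∈ {0,...,dbar} | F_f(d) ≥ β}`. -/
def ystar (dbar : ℕ) (β : ℝ) (f : ℕ → ℝ) : ℕ :=
  sInf {d : ℕ | d ≤ dbar ∧ β ≤ cdf f d}

/-- The empirical distribution of `n` observations. -/
def emp (n : ℕ) (d : Fin n → ℕ) (k : ℕ) : ℝ :=
  (∑ s : Fin n, if d s = k then (1 : ℝ) else 0) / n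

/-- The empirical newsvendor quantile `ŷ_{n+1}` computed from `n` observations. -/
def yhat (dbar : ℕ) (β : ℝ) (n : ℕ) (d : Fin n → ℕ) : ℕ := ystar dbar β (emp n d)

/-- The order-up-to level of period `n+1` of the newsvendor-based policy, given the demands
of periods `1,...,n`:  `y_1 = ŷ_1 = 0` and `y_t = max (ŷ_t) (y_{t-1} - d_{t-1})`. -/
def pol (dbar : ℕ) (β : ℝ) : (n : ℕ) → (Fin n → ℕ) → ℕ
  | 0, _ => 0
  | n + 1, d =>
      max (yhat dbar β (n + 1) d) (pol dbar β n (fun s => d s.castSucc) - d (Fin.last n))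

/-- The expectation `E_f[g(D_1,...,D_n)]` under i.i.d. draws from `f`. -/
def expec (dbar n : ℕ) (f : ℕ → ℝ) (g : (Fin n → ℕ) → ℝ) : ℝ :=
  ∑ d : Fin n → Fin (dbar + 1), (∏ s : Fin n, f (d s)) * g (fun s => (d s : ℕ))

open scoped Classical in
/-- The probability `P_f[(D_1,...,D_n) ∈ E]` under i.i.d. draws from `f`. -/
def prob (dbar n : ℕ) (f : ℕ → ℝ) (E : (Fin n → ℕ) → Prop) : ℝ :=
  ∑ d : Fin n → Fin (dbar + 1), if E (fun s => (d s : ℕ)) then ∏ s : Fin n, f (d s) else 0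

/-- `R^{T1}_f(y) = Σ_{t=1}^{T} E_f[Q_f(ŷ_t)] − T·Q*_f`. -/
def regretT1 (h b : ℝ) (dbar : ℕ) (β : ℝ) (f : ℕ → ℝ) (T : ℕ) : ℝ :=
  ∑ t ∈ Finset.range T, expec dbar t f (fun d => Q h b dbar f (yhat dbar β t d))
    - (T : ℝ) * Qstar h b dbar f

/-- `R^{T2}_f(y) = Σ_{t=3}^{T} E_f[Q_f(y_t) − Q_f(ŷ_t)]` (the index `n = t - 1` below). -/
def regretT2 (h b : ℝ) (dbar : ℕ) (β : ℝ) (f : ℕ → ℝ) (T : ℕ) : ℝ :=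
  ∑ n ∈ Finset.Ico 2 T,
    expec dbar n f (fun d => Q h b dbar f (pol dbar β n d) - Q h b dbar f (yhat dbar β n d))

/-- The `T`-period regret `R^{T}_f(y) = Σ_{t=1}^{T} E_f[Q_f(y_t(D_1,...,D_{t-1}))] − T·Q*_f`. -/
def regret (h b : ℝ) (dbar : ℕ) (β : ℝ) (f : ℕ → ℝ) (T : ℕ) : ℝ :=
  ∑ t ∈ Finset.range T, expec dbar t f (fun d => Q h b dbar f (pol dbar β t d))
    - (T : ℝ) * Qstar h b dbar f

/-- The binary Kullback–Leibler divergence between Bernoulli distributions `u` and `v`. -/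
def klB (u v : ℝ) : ℝ := u * Real.log (u / v) + (1 - u) * Real.log ((1 - u) / (1 - v))

/-- The total variation distance `δ_V(f,g)`. -/
def tvDist (dbar : ℕ) (f g : ℕ → ℝ) : ℝ := (∑ d ∈ Finset.range (dbar + 1), |f d - g d|) / 2


lemma cdf_mono_aux (f : ℕ → ℝ) (hf : ∀ d, 0 ≤ f d) {a c : ℕ} (hac : a ≤ c) :
    cdf f a ≤ cdf f c := by
  apply Finset.sum_le_sum_of_subset_of_nonneg
  · exact Finset.range_subset_range.2 (by omega)
  · intro i _ _; exact hf i

lemma Q_succ_sub (h b : ℝ) (dbar : ℕ) (g : ℕ → ℝ) (hg : IsDist dbar g) (y : ℕ)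
    (hy : y ≤ dbar) :
    Q h b dbar g (y + 1) - Q h b dbar g y = (h + b) * cdf g y - b := by
  have key : Q h b dbar g (y + 1) - Q h b dbar g y
      = ∑ d ∈ Finset.range (dbar + 1),
          (g d * (if d ≤ y then (h + b) else 0) - g d * b) := by
    rw [Q, Q, ← Finset.sum_sub_distrib]
    apply Finset.sum_congr rfl
    intro d _
    rcases le_or_gt d y with hd | hd
    · have h1 : ((y : ℝ) + 1 - d) = max ((y : ℝ) + 1 - d) 0 := by
        rw [max_eq_left]
        have : (d : ℝ) ≤ y := by exact_mod_cast hd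
        linarith
      have h2 : max ((d : ℝ) - (y + 1)) 0 = 0 := by
        rw [max_eq_right]
        have : (d : ℝ) ≤ y := by exact_mod_cast hd
        linarith
      have h3 : max ((y : ℝ) - d) 0 = (y : ℝ) - d := by
        rw [max_eq_left]
        have : (d : ℝ) ≤ y := by exact_mod_cast hd
        linarith
      have h4 : max ((d : ℝ) - y) 0 = 0 := by
        rw [max_eq_right]
        have : (d : ℝ) ≤ y := by exact_mod_cast hd
        linarith
      push_cast
      rw [← h1, h2, h3, h4, if_pos hd]
      ring
    · have hd' : (y : ℝ) + 1 ≤ d := by exact_mod_cast hd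
      have h1 : max ((y : ℝ) + 1 - d) 0 = 0 := by rw [max_eq_right]; linarith
      have h2 : max ((d : ℝ) - (y + 1)) 0 = (d : ℝ) - (y + 1) := by
        rw [max_eq_left]; linarith
      have h3 : max ((y : ℝ) - d) 0 = 0 := by rw [max_eq_right]; linarith
      have h4 : max ((d : ℝ) - y) 0 = (d : ℝ) - y := by rw [max_eq_left]; linarith
      push_cast
      rw [h1, h2, h3, h4, if_neg (by omega)]
      ring
  rw [key, Finset.sum_sub_distrib]
  have hsum1 : ∑ d ∈ Finset.range (dbar + 1), g d * (if d ≤ y then (h + b) else 0)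
      = (h + b) * cdf g y := by
    rw [cdf, Finset.mul_sum]
    rw [← Finset.sum_subset (Finset.range_subset_range.2 (by omega) :
        Finset.range (y + 1) ⊆ Finset.range (dbar + 1))]
    · apply Finset.sum_congr rfl
      intro d hd
      rw [if_pos (by simpa [Nat.lt_succ_iff] using Finset.mem_range.1 hd)]
      ring
    · intro d _ hd
      have hny : ¬ d ≤ y := by
        intro hc
        exact hd (Finset.mem_range.2 (by omega))
      rw [if_neg hny]; ring
  have hsum2 : ∑ d ∈ Finset.range (dbar + 1), g d * b = b := by
    rw [← Finset.sum_mul, hg.2.2, one_mul]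
  rw [hsum1, hsum2]

lemma ystar_spec (dbar : ℕ) (β : ℝ) (hβ1 : β ≤ 1) (g : ℕ → ℝ) (hg : IsDist dbar g) :
    ystar dbar β g ≤ dbar ∧ β ≤ cdf g (ystar dbar β g) := by
  have hne : ({d : ℕ | d ≤ dbar ∧ β ≤ cdf g d}).Nonempty := by
    refine ⟨dbar, le_rfl, ?_⟩
    rw [cdf, hg.2.2]; exact hβ1
  exact Nat.sInf_mem hne

lemma ystar_lt (dbar : ℕ) (β : ℝ) (g : ℕ → ℝ) {d : ℕ} (hd : d < ystar dbar β g)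
    (hdbar : d ≤ dbar) : cdf g d < β := by
  by_contra hc
  push_neg at hc
  have hle : sInf {d : ℕ | d ≤ dbar ∧ β ≤ cdf g d} ≤ d := Nat.sInf_le ⟨hdbar, hc⟩
  rw [ystar] at hd
  omega

lemma Q_ystar_le (h b : ℝ) (hh : 0 < h) (hb : 0 < b) (dbar : ℕ) (g : ℕ → ℝ)
    (hg : IsDist dbar g) (β : ℝ) (hβ : β = b / (h + b)) (y : ℕ) (hy : y ≤ dbar) :
    Q h b dbar g (ystar dbar β g) ≤ Q h b dbar g y := by
  have hhb : (0 : ℝ) < h + b := by linarith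
  have hβ1 : β ≤ 1 := by
    rw [hβ, div_le_one hhb]; linarith
  have hβb : (h + b) * β = b := by
    rw [hβ]; field_simp
  obtain ⟨hle, hmemβ⟩ := ystar_spec dbar β hβ1 g hg
  set ys := ystar dbar β g with hys
  rcases le_or_gt y ys with hcase | hcase
  · -- decreasing below ys
    have claim : ∀ k, Q h b dbar g ys ≤ Q h b dbar g (ys - k) := by
      intro k
      induction k with
      | zero => simp
      | succ k ih =>
        rcases le_or_gt ys k with hk | hk
        · have : ys - (k + 1) = ys - k := by omega
          rw [this]; exact ih
        · have hj : ys - (k + 1) < ys := by omega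
          have hjd : ys - (k + 1) ≤ dbar := by omega
          have hinc := Q_succ_sub h b dbar g hg (ys - (k + 1)) hjd
          have hcdf : cdf g (ys - (k + 1)) < β := ystar_lt dbar β g hj hjd
          have hstep : ys - (k + 1) + 1 = ys - k := by omega
          rw [hstep] at hinc
          have : (h + b) * cdf g (ys - (k + 1)) < b := by
            calc (h + b) * cdf g (ys - (k + 1)) < (h + b) * β := by
                  apply mul_lt_mul_of_pos_left hcdf hhb
              _ = b := hβb
          have := ih
          linarith
    have := claim (ys - y)
    have hyy : ys - (ys - y) = y := by omega
    rwa [hyy] at this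
  · -- increasing above ys
    have claim : ∀ k, ys + k ≤ dbar → Q h b dbar g ys ≤ Q h b dbar g (ys + k) := by
      intro k
      induction k with
      | zero => simp
      | succ k ih =>
        intro hk
        have hk' : ys + k ≤ dbar := by omega
        have hinc := Q_succ_sub h b dbar g hg (ys + k) hk'
        have hcdf : β ≤ cdf g (ys + k) :=
          le_trans hmemβ (cdf_mono_aux g hg.1 (by omega))
        have : b ≤ (h + b) * cdf g (ys + k) := by
          calc b = (h + b) * β := hβb.symm
            _ ≤ (h + b) * cdf g (ys + k) := by
                apply mul_le_mul_of_nonneg_left hcdf (le_of_lt hhb)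
        have := ih hk'
        have hstep : ys + (k + 1) = ys + k + 1 := by omega
        rw [hstep]
        linarith
    have := claim (y - ys) (by omega)
    have hyy : ys + (y - ys) = y := by omega
    rwa [hyy] at this

lemma Q_diff_le (h b : ℝ) (hh : 0 < h) (hb : 0 < b) (dbar : ℕ) (f g : ℕ → ℝ)
    (y : ℕ) (hy : y ≤ dbar) :
    Q h b dbar f y - Q h b dbar g y
      ≤ max h b * dbar * ∑ d ∈ Finset.range (dbar + 1), |f d - g d| := by
  rw [Q, Q, ← Finset.sum_sub_distrib, Finset.mul_sum]
  apply Finset.sum_le_sum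
  intro d hd
  have hdd : d ≤ dbar := Nat.lt_succ_iff.1 (Finset.mem_range.1 hd)
  set c : ℝ := h * max ((y : ℝ) - d) 0 + b * max ((d : ℝ) - y) 0 with hc
  have h1 : f d * c - g d * c = (f d - g d) * c := by ring
  rw [h1]
  have hA : (0:ℝ) ≤ max ((y : ℝ) - d) 0 := le_max_right _ _
  have hB : (0:ℝ) ≤ max ((d : ℝ) - y) 0 := le_max_right _ _
  have hcnn : 0 ≤ c := by
    rw [hc]; positivity
  have hcb : c ≤ max h b * dbar := by
    have hsum : max ((y : ℝ) - d) 0 + max ((d : ℝ) - y) 0 ≤ dbar := by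
      have hyd : (y : ℝ) ≤ dbar := by exact_mod_cast hy
      have hdd' : (d : ℝ) ≤ dbar := by exact_mod_cast hdd
      have hy0 : (0:ℝ) ≤ y := Nat.cast_nonneg _
      have hd0 : (0:ℝ) ≤ d := Nat.cast_nonneg _
      rcases le_total ((y:ℝ)) ((d:ℝ)) with hyd' | hyd'
      · rw [max_eq_right (by linarith), max_eq_left (by linarith)]; linarith
      · rw [max_eq_left (by linarith), max_eq_right (by linarith)]; linarith
    calc c ≤ max h b * max ((y : ℝ) - d) 0 + max h b * max ((d : ℝ) - y) 0 := by
          apply add_le_add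
          · exact mul_le_mul_of_nonneg_right (le_max_left h b) hA
          · exact mul_le_mul_of_nonneg_right (le_max_right h b) hB
      _ = max h b * (max ((y : ℝ) - d) 0 + max ((d : ℝ) - y) 0) := by ring
      _ ≤ max h b * dbar := by
          apply mul_le_mul_of_nonneg_left hsum
          exact le_trans (le_of_lt hh) (le_max_left h b)
  calc (f d - g d) * c ≤ |f d - g d| * c := by
        apply mul_le_mul_of_nonneg_right (le_abs_self _) hcnn
    _ ≤ |f d - g d| * (max h b * dbar) := by
        apply mul_le_mul_of_nonneg_left hcb (abs_nonneg _)
    _ = max h b * dbar * |f d - g d| := by ring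

theorem stmt3 (dbar : ℕ) (hdbar : 1 ≤ dbar) (h b : ℝ) (hh : 0 < h) (hb : 0 < b)
    (β : ℝ) (hβ : β = b / (h + b)) (f g : ℕ → ℝ) (hf : IsDist dbar f) (hg : IsDist dbar g) :
    Q h b dbar f (ystar dbar β g) - Q h b dbar f (ystar dbar β f)
      ≤ 4 * max h b * (dbar : ℝ) * tvDist dbar f g := by
  have hhb : (0 : ℝ) < h + b := by linarith
  have hβ1 : β ≤ 1 := by rw [hβ, div_le_one hhb]; linarith
  obtain ⟨hyg, _⟩ := ystar_spec dbar β hβ1 g hg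
  obtain ⟨hyf, _⟩ := ystar_spec dbar β hβ1 f hf
  set yg := ystar dbar β g
  set yf := ystar dbar β f
  have h1 : Q h b dbar f yg - Q h b dbar g yg
      ≤ max h b * dbar * ∑ d ∈ Finset.range (dbar + 1), |f d - g d| :=
    Q_diff_le h b hh hb dbar f g yg hyg
  have h2 : Q h b dbar g yg ≤ Q h b dbar g yf :=
    Q_ystar_le h b hh hb dbar g hg β hβ yf hyf
  have h3 : Q h b dbar g yf - Q h b dbar f yf
      ≤ max h b * dbar * ∑ d ∈ Finset.range (dbar + 1), |f d - g d| := by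
    have := Q_diff_le h b hh hb dbar g f yf hyf
    have hcongr : ∑ d ∈ Finset.range (dbar + 1), |g d - f d|
        = ∑ d ∈ Finset.range (dbar + 1), |f d - g d| := by
      apply Finset.sum_congr rfl
      intro d _; exact abs_sub_comm _ _
    rwa [hcongr] at this
  have htv : tvDist dbar f g = (∑ d ∈ Finset.range (dbar + 1), |f d - g d|) / 2 := rfl
  rw [htv]
  linarith
end
end

section
/- For all f, g ∈ Δ, Q_f(y*_{g,β}) − Q_f(y*_{f,β}) ≤ 2·max(h,b)·d̄·√(2·D_KL(g||f)). -/
open Finset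

noncomputable section

private lemma klPoint (p q : ℝ) (hp : 0 ≤ p) (hq : 0 ≤ q) (hpz : p = 0 → q = 0) :
    2 * q - 2 * Real.sqrt (p * q) ≤ q * Real.log (q / p) := by
  rcases eq_or_lt_of_le hq with hq0 | hq0
  · simp [← hq0]
  have hp0 : 0 < p := by
    rcases eq_or_lt_of_le hp with h0 | h0
    · exact absurd (hpz h0.symm) (ne_of_gt hq0)
    · exact h0
  have h1 : Real.log (q / p) = 2 * Real.log (Real.sqrt (q / p)) := by
    rw [Real.log_sqrt (by positivity)]; ring
  have h2 : 1 - (Real.sqrt (q / p))⁻¹ ≤ Real.log (Real.sqrt (q / p)) :=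
    Real.one_sub_inv_le_log_of_pos (Real.sqrt_pos.2 (by positivity))
  have h3 : (Real.sqrt (q / p))⁻¹ = Real.sqrt (p / q) := by
    rw [← Real.sqrt_inv, inv_div]
  have h4 : q * Real.sqrt (p / q) = Real.sqrt (p * q) := by
    nth_rewrite 1 [← Real.sqrt_sq hq]
    rw [← Real.sqrt_mul (by positivity)]
    congr 1
    field_simp
  rw [h1]
  have h5 : q * (1 - Real.sqrt (p / q)) ≤ q * Real.log (Real.sqrt (q / p)) :=
    mul_le_mul_of_nonneg_left (h3 ▸ h2) hq
  nlinarith [h4, h5]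

theorem stmt4 (dbar : ℕ) (hdbar : 1 ≤ dbar) (h b : ℝ) (hh : 0 < h) (hb : 0 < b)
    (β : ℝ) (hβ : β = b / (h + b)) (f g : ℕ → ℝ) (hf : IsDist dbar f) (hg : IsDist dbar g)
    (habs : ∀ d ≤ dbar, f d = 0 → g d = 0) :
    Q h b dbar f (ystar dbar β g) - Q h b dbar f (ystar dbar β f)
      ≤ 2 * max h b * (dbar : ℝ) *
        Real.sqrt (2 * ∑ d ∈ Finset.range (dbar + 1), g d * Real.log (g d / f d)) := by
  obtain ⟨hf0, hfz, hf1⟩ := hf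
  obtain ⟨hg0, hgz, hg1⟩ := hg
  set S := Finset.range (dbar + 1) with hS
  set KL := ∑ d ∈ S, g d * Real.log (g d / f d) with hKLdef
  set L1 := ∑ d ∈ S, |f d - g d| with hL1def
  have hhb : (0:ℝ) < h + b := by linarith
  have hβ0 : 0 < β := by rw [hβ]; positivity
  have hβ1 : β < 1 := by rw [hβ, div_lt_one hhb]; linarith
  -- pointwise KL lower bound
  have hA : ∑ d ∈ S, (2 * g d - 2 * Real.sqrt (f d * g d)) ≤ KL := by
    refine Finset.sum_le_sum fun d hd => ?_
    have hdle : d ≤ dbar := by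
      have := Finset.mem_range.1 hd; omega
    exact klPoint (f d) (g d) (hf0 d) (hg0 d) (habs d hdle)
  have hexp : ∀ d ∈ S, (Real.sqrt (g d) - Real.sqrt (f d))^2
      = g d + f d - 2 * Real.sqrt (f d * g d) := by
    intro d _
    have e1 : Real.sqrt (g d) ^ 2 = g d := Real.sq_sqrt (hg0 d)
    have e2 : Real.sqrt (f d) ^ 2 = f d := Real.sq_sqrt (hf0 d)
    have e3 : Real.sqrt (f d) * Real.sqrt (g d) = Real.sqrt (f d * g d) :=
      (Real.sqrt_mul (hf0 d) _).symm
    nlinarith [e1, e2, e3]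
  have hH2 : ∑ d ∈ S, (Real.sqrt (g d) - Real.sqrt (f d))^2 ≤ KL := by
    have hBB : ∑ d ∈ S, (g d + f d - 2 * Real.sqrt (f d * g d))
        = ∑ d ∈ S, (2 * g d - 2 * Real.sqrt (f d * g d)) := by
      rw [← sub_eq_zero, ← Finset.sum_sub_distrib]
      calc ∑ d ∈ S, ((g d + f d - 2 * Real.sqrt (f d * g d))
              - (2 * g d - 2 * Real.sqrt (f d * g d)))
          = ∑ d ∈ S, (f d - g d) := Finset.sum_congr rfl fun d _ => by ring
        _ = 0 := by rw [Finset.sum_sub_distrib, hf1, hg1]; ring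
    calc ∑ d ∈ S, (Real.sqrt (g d) - Real.sqrt (f d))^2
        = ∑ d ∈ S, (g d + f d - 2 * Real.sqrt (f d * g d)) := Finset.sum_congr rfl hexp
      _ = ∑ d ∈ S, (2 * g d - 2 * Real.sqrt (f d * g d)) := hBB
      _ ≤ KL := hA
  have hKL0 : 0 ≤ KL :=
    le_trans (Finset.sum_nonneg fun d _ => sq_nonneg _) hH2
  -- Cauchy-Schwarz step
  have habs2 : ∀ d ∈ S, |f d - g d|
      = |Real.sqrt (f d) - Real.sqrt (g d)| * (Real.sqrt (f d) + Real.sqrt (g d)) := by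
    intro d _
    rw [← abs_of_nonneg (add_nonneg (Real.sqrt_nonneg (f d)) (Real.sqrt_nonneg (g d))),
      ← abs_mul]
    congr 1
    nlinarith [Real.sq_sqrt (hf0 d), Real.sq_sqrt (hg0 d)]
  have hsum4 : ∑ d ∈ S, (Real.sqrt (f d) + Real.sqrt (g d))^2 ≤ 4 := by
    have hptw : ∀ d ∈ S, (Real.sqrt (f d) + Real.sqrt (g d))^2 ≤ 2 * (f d + g d) := by
      intro d _
      nlinarith [Real.sq_sqrt (hf0 d), Real.sq_sqrt (hg0 d),
        sq_nonneg (Real.sqrt (f d) - Real.sqrt (g d))]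
    calc ∑ d ∈ S, (Real.sqrt (f d) + Real.sqrt (g d))^2
        ≤ ∑ d ∈ S, 2 * (f d + g d) := Finset.sum_le_sum hptw
      _ = 4 := by rw [← Finset.mul_sum, Finset.sum_add_distrib, hf1, hg1]; norm_num
  have hL1sq : L1^2 ≤ 4 * KL := by
    have hcs := Finset.sum_mul_sq_le_sq_mul_sq S
      (fun d => |Real.sqrt (f d) - Real.sqrt (g d)|)
      (fun d => Real.sqrt (f d) + Real.sqrt (g d))
    have hsq : ∑ d ∈ S, |Real.sqrt (f d) - Real.sqrt (g d)|^2
        = ∑ d ∈ S, (Real.sqrt (g d) - Real.sqrt (f d))^2 :=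
      Finset.sum_congr rfl fun d _ => by rw [sq_abs]; ring
    have hL1eq : L1 = ∑ d ∈ S,
        |Real.sqrt (f d) - Real.sqrt (g d)| * (Real.sqrt (f d) + Real.sqrt (g d)) :=
      Finset.sum_congr rfl habs2
    calc L1^2 ≤ (∑ d ∈ S, |Real.sqrt (f d) - Real.sqrt (g d)|^2)
          * ∑ d ∈ S, (Real.sqrt (f d) + Real.sqrt (g d))^2 := by rw [hL1eq]; exact hcs
      _ ≤ KL * 4 := by
          refine mul_le_mul (hsq ▸ hH2) hsum4 ?_ hKL0
          exact Finset.sum_nonneg fun d _ => sq_nonneg _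
      _ = 4 * KL := by ring
  have hΔ0 : 0 ≤ L1 / 2 := by
    have : 0 ≤ L1 := Finset.sum_nonneg fun d _ => abs_nonneg _
    linarith
  have hΔ2 : L1 / 2 ≤ Real.sqrt (2 * KL) := by
    rw [← Real.sqrt_sq hΔ0]
    exact Real.sqrt_le_sqrt (by nlinarith)
  -- cdf bound
  have hcdfb : ∀ y, y ≤ dbar → |cdf f y - cdf g y| ≤ L1 / 2 := by
    intro y hy
    have hsplit : ∑ d ∈ Finset.range (y+1), |f d - g d|
        + ∑ d ∈ Finset.Ico (y+1) (dbar+1), |f d - g d| = L1 := by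
      rw [hL1def, hS]
      simp only [Finset.range_eq_Ico]
      exact Finset.sum_Ico_consecutive _ (Nat.zero_le _) (by omega)
    have htot : ∑ d ∈ Finset.range (y+1), (f d - g d)
        + ∑ d ∈ Finset.Ico (y+1) (dbar+1), (f d - g d) = 0 := by
      have e0 : ∑ d ∈ Finset.range (y+1), (f d - g d)
          + ∑ d ∈ Finset.Ico (y+1) (dbar+1), (f d - g d) = ∑ d ∈ S, (f d - g d) := by
        rw [hS]
        simp only [Finset.range_eq_Ico]
        exact Finset.sum_Ico_consecutive _ (Nat.zero_le _) (by omega)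
      rw [e0, Finset.sum_sub_distrib, hf1, hg1]; ring
    have h1 : |∑ d ∈ Finset.range (y+1), (f d - g d)|
        ≤ ∑ d ∈ Finset.range (y+1), |f d - g d| := Finset.abs_sum_le_sum_abs _ _
    have h2 : |∑ d ∈ Finset.Ico (y+1) (dbar+1), (f d - g d)|
        ≤ ∑ d ∈ Finset.Ico (y+1) (dbar+1), |f d - g d| := Finset.abs_sum_le_sum_abs _ _
    have hcd : cdf f y - cdf g y = ∑ d ∈ Finset.range (y+1), (f d - g d) := by
      rw [cdf, cdf, Finset.sum_sub_distrib]
    rw [hcd]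
    have hAB : ∑ d ∈ Finset.range (y+1), (f d - g d)
        = - ∑ d ∈ Finset.Ico (y+1) (dbar+1), (f d - g d) := by linarith
    have h2' : |∑ d ∈ Finset.range (y+1), (f d - g d)|
        ≤ ∑ d ∈ Finset.Ico (y+1) (dbar+1), |f d - g d| := by
      rw [hAB, abs_neg]; exact h2
    have h1' := abs_le.1 h1
    have h2'' := abs_le.1 h2'
    rw [abs_le]
    constructor <;> linarith [abs_nonneg (∑ d ∈ Finset.range (y+1), (f d - g d))]
  -- cdf monotone
  have hmono : ∀ (p : ℕ → ℝ), (∀ d, 0 ≤ p d) → ∀ a c : ℕ, a ≤ c → cdf p a ≤ cdf p c := by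
    intro p hp a c hac
    exact Finset.sum_le_sum_of_subset_of_nonneg
      (Finset.range_subset_range.2 (by omega)) (fun i _ _ => hp i)
  -- ystar facts
  have hcff : cdf f dbar = 1 := by rw [cdf, ← hS]; exact hf1
  have hcfg : cdf g dbar = 1 := by rw [cdf, ← hS]; exact hg1
  have hyf : ystar dbar β f ≤ dbar ∧ β ≤ cdf f (ystar dbar β f) := by
    have hne : {d : ℕ | d ≤ dbar ∧ β ≤ cdf f d}.Nonempty :=
      ⟨dbar, ⟨le_refl _, by rw [hcff]; exact hβ1.le⟩⟩
    exact Nat.sInf_mem hne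
  have hyg : ystar dbar β g ≤ dbar ∧ β ≤ cdf g (ystar dbar β g) := by
    have hne : {d : ℕ | d ≤ dbar ∧ β ≤ cdf g d}.Nonempty :=
      ⟨dbar, ⟨le_refl _, by rw [hcfg]; exact hβ1.le⟩⟩
    exact Nat.sInf_mem hne
  have hyflt : ∀ y, y < ystar dbar β f → y ≤ dbar → cdf f y < β := by
    intro y hlt hle
    by_contra hge
    push_neg at hge
    have hmem : y ∈ {d : ℕ | d ≤ dbar ∧ β ≤ cdf f d} := ⟨hle, hge⟩
    have h2 : ystar dbar β f ≤ y := Nat.sInf_le hmem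
    omega
  have hyglt : ∀ y, y < ystar dbar β g → y ≤ dbar → cdf g y < β := by
    intro y hlt hle
    by_contra hge
    push_neg at hge
    have hmem : y ∈ {d : ℕ | d ≤ dbar ∧ β ≤ cdf g d} := ⟨hle, hge⟩
    have h2 : ystar dbar β g ≤ y := Nat.sInf_le hmem
    omega
  -- Q increment
  have hQdiff : ∀ y : ℕ, y ≤ dbar →
      Q h b dbar f (y+1) - Q h b dbar f y = (h+b) * (cdf f y - β) := by
    intro y hy
    have e1 : Q h b dbar f (y+1) - Q h b dbar f y
        = ∑ d ∈ Finset.range (dbar+1), ((if d ≤ y then f d * (h+b) else 0) - f d * b) := by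
      rw [Q, Q, ← Finset.sum_sub_distrib]
      refine Finset.sum_congr rfl fun d _ => ?_
      rcases le_or_gt d y with hdy | hdy
      · have hdy' : (d:ℝ) ≤ (y:ℝ) := Nat.cast_le.2 hdy
        have m1 : max (((y+1:ℕ):ℝ) - (d:ℝ)) 0 = ((y:ℝ)+1) - (d:ℝ) := by
          rw [max_eq_left] <;> push_cast <;> linarith
        have m2 : max ((d:ℝ) - ((y+1:ℕ):ℝ)) 0 = 0 := by
          rw [max_eq_right] <;> push_cast <;> linarith
        have m3 : max ((y:ℝ) - (d:ℝ)) 0 = (y:ℝ) - (d:ℝ) := max_eq_left (by linarith)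
        have m4 : max ((d:ℝ) - (y:ℝ)) 0 = 0 := max_eq_right (by linarith)
        rw [m1, m2, m3, m4, if_pos hdy]
        ring
      · have hdy' : (y:ℝ) + 1 ≤ (d:ℝ) := by
          have : (y+1 : ℕ) ≤ d := hdy
          exact_mod_cast Nat.cast_le.2 this
        have m1 : max (((y+1:ℕ):ℝ) - (d:ℝ)) 0 = 0 := by
          rw [max_eq_right] <;> push_cast <;> linarith
        have m2 : max ((d:ℝ) - ((y+1:ℕ):ℝ)) 0 = (d:ℝ) - ((y:ℝ)+1) := by
          rw [max_eq_left] <;> push_cast <;> linarith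
        have m3 : max ((y:ℝ) - (d:ℝ)) 0 = 0 := max_eq_right (by linarith)
        have m4 : max ((d:ℝ) - (y:ℝ)) 0 = (d:ℝ) - (y:ℝ) := max_eq_left (by linarith)
        rw [m1, m2, m3, m4, if_neg (by omega)]
        push_cast
        ring
    have hfil : (Finset.range (dbar+1)).filter (fun d => d ≤ y) = Finset.range (y+1) := by
      ext d
      simp only [Finset.mem_filter, Finset.mem_range]
      omega
    have e2 : ∑ d ∈ Finset.range (dbar+1), (if d ≤ y then f d * (h+b) else 0)
        = cdf f y * (h+b) := by
      rw [← Finset.sum_filter, hfil, cdf, Finset.sum_mul]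
    have e3 : ∑ d ∈ Finset.range (dbar+1), f d * b = b := by
      rw [← Finset.sum_mul, ← hS, hf1, one_mul]
    rw [e1, Finset.sum_sub_distrib, e2, e3, hβ]
    field_simp
  -- telescoping
  have hQtel : ∀ m n : ℕ, m ≤ n → n ≤ dbar →
      Q h b dbar f n - Q h b dbar f m
        = ∑ y ∈ Finset.Ico m n, (h+b) * (cdf f y - β) := by
    intro m n hmn
    induction n, hmn using Nat.le_induction with
    | base => intro _; simp
    | succ n hmn ih =>
      intro hn
      rw [Finset.sum_Ico_succ_top hmn]
      have e1 := hQdiff n (by omega)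
      have e2 := ih (by omega)
      linarith
  -- final combination
  have hmax0 : (0:ℝ) ≤ 2 * max h b := by
    have : (0:ℝ) < max h b := lt_max_of_lt_left hh
    linarith
  have hbound : (h+b) * (L1/2) ≤ (2 * max h b) * Real.sqrt (2 * KL) := by
    refine mul_le_mul ?_ hΔ2 hΔ0 hmax0
    rcases le_total h b with hc | hc
    · rw [max_eq_right hc]; linarith
    · rw [max_eq_left hc]; linarith
  rcases le_or_gt (ystar dbar β f) (ystar dbar β g) with hle | hlt
  · have htel := hQtel _ _ hle hyg.1
    have hterm : ∀ y ∈ Finset.Ico (ystar dbar β f) (ystar dbar β g),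
        (h+b) * (cdf f y - β) ≤ (h+b) * (L1/2) := by
      intro y hy
      rw [Finset.mem_Ico] at hy
      have hydbar : y ≤ dbar := by have := hyg.1; omega
      have h1 : cdf g y < β := hyglt y hy.2 hydbar
      have h3 := abs_le.1 (hcdfb y hydbar)
      exact mul_le_mul_of_nonneg_left (by linarith [h3.2]) hhb.le
    calc Q h b dbar f (ystar dbar β g) - Q h b dbar f (ystar dbar β f)
        = ∑ y ∈ Finset.Ico (ystar dbar β f) (ystar dbar β g), (h+b) * (cdf f y - β) := htel
      _ ≤ ∑ _y ∈ Finset.Ico (ystar dbar β f) (ystar dbar β g), (h+b) * (L1/2) :=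
          Finset.sum_le_sum hterm
      _ = ((ystar dbar β g - ystar dbar β f : ℕ) : ℝ) * ((h+b) * (L1/2)) := by
          rw [Finset.sum_const, Nat.card_Ico, nsmul_eq_mul]
      _ ≤ (dbar : ℝ) * ((h+b) * (L1/2)) := by
          refine mul_le_mul_of_nonneg_right ?_ (by positivity)
          have hcard : (ystar dbar β g - ystar dbar β f : ℕ) ≤ dbar := by
            have := hyg.1; omega
          exact_mod_cast hcard
      _ ≤ 2 * max h b * (dbar:ℝ) * Real.sqrt (2 * KL) := by
          calc (dbar:ℝ) * ((h+b) * (L1/2))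
              ≤ (dbar:ℝ) * ((2 * max h b) * Real.sqrt (2 * KL)) :=
                mul_le_mul_of_nonneg_left hbound (Nat.cast_nonneg dbar)
            _ = 2 * max h b * (dbar:ℝ) * Real.sqrt (2 * KL) := by ring
  · have htel := hQtel _ _ hlt.le hyf.1
    have hflip : Q h b dbar f (ystar dbar β g) - Q h b dbar f (ystar dbar β f)
        = ∑ y ∈ Finset.Ico (ystar dbar β g) (ystar dbar β f), (h+b) * (β - cdf f y) := by
      have e : ∑ y ∈ Finset.Ico (ystar dbar β g) (ystar dbar β f), (h+b) * (β - cdf f y)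
          = - ∑ y ∈ Finset.Ico (ystar dbar β g) (ystar dbar β f), (h+b) * (cdf f y - β) := by
        rw [← Finset.sum_neg_distrib]
        exact Finset.sum_congr rfl fun y _ => by ring
      rw [e]
      linarith
    have hterm : ∀ y ∈ Finset.Ico (ystar dbar β g) (ystar dbar β f),
        (h+b) * (β - cdf f y) ≤ (h+b) * (L1/2) := by
      intro y hy
      rw [Finset.mem_Ico] at hy
      have hydbar : y ≤ dbar := by have := hyf.1; omega
      have h1 : β ≤ cdf g y := le_trans hyg.2 (hmono g hg0 _ _ hy.1)
      have h3 := abs_le.1 (hcdfb y hydbar)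
      exact mul_le_mul_of_nonneg_left (by linarith [h3.1]) hhb.le
    calc Q h b dbar f (ystar dbar β g) - Q h b dbar f (ystar dbar β f)
        = ∑ y ∈ Finset.Ico (ystar dbar β g) (ystar dbar β f), (h+b) * (β - cdf f y) := hflip
      _ ≤ ∑ _y ∈ Finset.Ico (ystar dbar β g) (ystar dbar β f), (h+b) * (L1/2) :=
          Finset.sum_le_sum hterm
      _ = ((ystar dbar β f - ystar dbar β g : ℕ) : ℝ) * ((h+b) * (L1/2)) := by
          rw [Finset.sum_const, Nat.card_Ico, nsmul_eq_mul]
      _ ≤ (dbar : ℝ) * ((h+b) * (L1/2)) := by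
          refine mul_le_mul_of_nonneg_right ?_ (by positivity)
          have hcard : (ystar dbar β f - ystar dbar β g : ℕ) ≤ dbar := by
            have := hyf.1; omega
          exact_mod_cast hcard
      _ ≤ 2 * max h b * (dbar:ℝ) * Real.sqrt (2 * KL) := by
          calc (dbar:ℝ) * ((h+b) * (L1/2))
              ≤ (dbar:ℝ) * ((2 * max h b) * Real.sqrt (2 * KL)) :=
                mul_le_mul_of_nonneg_left hbound (Nat.cast_nonneg dbar)
            _ = 2 * max h b * (dbar:ℝ) * Real.sqrt (2 * KL) := by ring
end
end

section
/- (Quantile deviation bound.) Assume case 1: α_{f,β} := F_f(y*_{f,β}−1) < β < γ_{f,β} := F_f(y*_{f,β}), and set κ_{f,β} = min{D_KL(β||α_{f,β}), D_KL(β||γ_{f,β})} > 0 (with D_KL(β||0) = +∞ if α_{f,β} = 0). Then for every t ≥ 2, both P_f[ŷ_t ≤ y*_{f,β} − 1] and P_f[ŷ_t ≥ y*_{f,β} + 1] are at most min{t²·exp(−κ_{f,β}·(t−1)), 1}. -/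
open Finset

noncomputable section

section AuxChernoff

lemma sum_prod_pow' (n m : ℕ) (φ : ℕ → ℝ) :
    ∑ d : Fin n → Fin (m+1), ∏ s : Fin n, φ (d s) =
      (∑ i ∈ Finset.range (m+1), φ i) ^ n := by
  have h := Finset.prod_univ_sum (fun _ : Fin n => (Finset.univ : Finset (Fin (m+1))))
    (fun _ j => φ (j : ℕ))
  simp only [Fintype.piFinset_univ] at h
  rw [← h, ← Fin.sum_univ_eq_sum_range]
  simp [Finset.prod_const]

lemma prob_le_one' (dbar n : ℕ) (f : ℕ → ℝ) (hf : IsDist dbar f) (E : (Fin n → ℕ) → Prop) :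
    prob dbar n f E ≤ 1 := by
  classical
  unfold prob
  calc ∑ d : Fin n → Fin (dbar + 1), (if E (fun s => (d s : ℕ)) then ∏ s : Fin n, f (d s) else 0)
      ≤ ∑ d : Fin n → Fin (dbar + 1), ∏ s : Fin n, f (d s) := by
        apply Finset.sum_le_sum
        intro d _
        split_ifs
        · exact le_rfl
        · exact Finset.prod_nonneg fun s _ => hf.1 _
    _ = 1 := by rw [sum_prod_pow', hf.2.2, one_pow]

lemma prob_mono' (dbar n : ℕ) (f : ℕ → ℝ) (hf : IsDist dbar f) (E E' : (Fin n → ℕ) → Prop)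
    (h : ∀ d : Fin n → Fin (dbar + 1), E (fun s => (d s : ℕ)) → E' (fun s => (d s : ℕ))) :
    prob dbar n f E ≤ prob dbar n f E' := by
  classical
  unfold prob
  apply Finset.sum_le_sum
  intro d _
  split_ifs with h1 h2
  · exact le_rfl
  · exact absurd (h d h1) h2
  · exact Finset.prod_nonneg fun s _ => hf.1 _
  · exact le_rfl

lemma chernoff' (dbar n : ℕ) (hn : 1 ≤ n) (f : ℕ → ℝ) (hf : IsDist dbar f)
    (B : ℕ → Prop) [DecidablePred B] (u : ℝ) (hu0 : 0 < u) (hu1 : u < 1)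
    (v : ℝ) (hv : v = ∑ i ∈ (Finset.range (dbar+1)).filter B, f i) (hvu : v < u)
    (κ : ℝ) (hκ : v = 0 ∨ κ ≤ klB u v) :
    prob dbar n f (fun D => u * n ≤ ∑ s : Fin n, if B (D s) then (1:ℝ) else 0)
      ≤ Real.exp (-κ * n) := by
  classical
  have hv0 : 0 ≤ v := hv ▸ Finset.sum_nonneg fun i _ => hf.1 i
  have hn0 : (0:ℝ) < n := by exact_mod_cast hn
  rcases eq_or_lt_of_le hv0 with hv0' | hv0'
  · have hf0 : ∀ i, i < dbar + 1 → B i → f i = 0 := by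
      intro i hi hBi
      have h0 : ∑ i ∈ (Finset.range (dbar+1)).filter B, f i = 0 := by rw [← hv, ← hv0']
      exact (Finset.sum_eq_zero_iff_of_nonneg fun j _ => hf.1 j).mp h0 i
        (by simp [Finset.mem_filter, Finset.mem_range, hi, hBi])
    have : prob dbar n f (fun D => u * n ≤ ∑ s : Fin n, if B (D s) then (1:ℝ) else 0) = 0 := by
      unfold prob
      apply Finset.sum_eq_zero
      intro d _
      split_ifs with hE
      · have hpos : (0:ℝ) < ∑ s : Fin n, if B ((d s : ℕ)) then (1:ℝ) else 0 := by
          calc (0:ℝ) < u * n := by positivity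
            _ ≤ _ := hE
        have hne : (Finset.univ.filter fun s => B ((d s : ℕ))).Nonempty := by
          by_contra hB
          rw [Finset.not_nonempty_iff_eq_empty] at hB
          have : (∑ s : Fin n, if B ((d s : ℕ)) then (1:ℝ) else 0) = 0 := by
            apply Finset.sum_eq_zero
            intro s hs
            have : ¬ B ((d s : ℕ)) := by
              intro hBs
              have : s ∈ Finset.univ.filter fun s => B ((d s : ℕ)) := by
                simp [hBs]
              simp [hB] at this
            simp [this]
          rw [this] at hpos
          exact lt_irrefl 0 hpos
        obtain ⟨s, hs⟩ := hne
        have hBs : B ((d s : ℕ)) := (Finset.mem_filter.mp hs).2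
        exact Finset.prod_eq_zero (Finset.mem_univ s) (hf0 _ (d s).isLt hBs)
      · rfl
    rw [this]; positivity
  · have hκ' : κ ≤ klB u v := by
      rcases hκ with h | h
      · exact absurd h.symm hv0'.ne
      · exact h
    set w : ℝ := u * (1 - v) / (v * (1 - u)) with hw
    have h1u : (0:ℝ) < 1 - u := by linarith
    have h1v : (0:ℝ) < 1 - v := by linarith
    have hw0 : 0 < w := by positivity
    have hw1 : 1 < w := by
      rw [hw, lt_div_iff₀ (by positivity)]
      nlinarith
    set φ : ℕ → ℝ := fun i => f i * (if B i then w else 1) with hφ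
    have hφ0 : ∀ i, 0 ≤ φ i := by
      intro i
      have := hf.1 i
      simp only [hφ]
      split_ifs <;> nlinarith
    have step1 : prob dbar n f (fun D => u * n ≤ ∑ s : Fin n, if B (D s) then (1:ℝ) else 0)
        ≤ w ^ (-(u * n)) * (∑ i ∈ Finset.range (dbar+1), φ i) ^ n := by
      rw [← sum_prod_pow', Finset.mul_sum]
      unfold prob
      apply Finset.sum_le_sum
      intro d _
      have hprodφ : ∏ s : Fin n, φ ((d s : ℕ))
          = (∏ s : Fin n, f ((d s : ℕ))) * w ^ ((Finset.univ.filter fun s => B ((d s : ℕ))).card) := by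
        simp only [hφ]
        rw [Finset.prod_mul_distrib]
        congr 1
        rw [Finset.prod_ite, Finset.prod_const, Finset.prod_const, one_pow, mul_one]
      have hfprod : 0 ≤ ∏ s : Fin n, f ((d s : ℕ)) := Finset.prod_nonneg fun s _ => hf.1 _
      split_ifs with hE
      · replace hE : u * (n:ℝ) ≤ ∑ s : Fin n, if B ((d s : ℕ)) then (1:ℝ) else 0 := hE
        have hcnt : (∑ s : Fin n, if B ((d s : ℕ)) then (1:ℝ) else 0)
            = ((Finset.univ.filter fun s => B ((d s : ℕ))).card : ℝ) := by
          simp [Finset.sum_boole]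
        rw [hprodφ]
        set c : ℕ := (Finset.univ.filter fun s => B ((d s : ℕ))).card
        have hc : u * n ≤ (c : ℝ) := by rw [hcnt] at hE; exact hE
        have key : (1:ℝ) ≤ w ^ (-(u * n)) * w ^ c := by
          rw [← Real.rpow_natCast w c, ← Real.rpow_add hw0]
          calc (1:ℝ) = w ^ (0:ℝ) := (Real.rpow_zero w).symm
            _ ≤ w ^ (-(u * n) + c) := Real.rpow_le_rpow_of_exponent_le hw1.le (by linarith)
        calc ∏ s : Fin n, f ((d s : ℕ))
            = (∏ s : Fin n, f ((d s : ℕ))) * 1 := (mul_one _).symm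
          _ ≤ (∏ s : Fin n, f ((d s : ℕ))) * (w ^ (-(u * n)) * w ^ c) :=
              mul_le_mul_of_nonneg_left key hfprod
          _ = w ^ (-(u * n)) * ((∏ s : Fin n, f ((d s : ℕ))) * w ^ c) := by ring
      · have : 0 ≤ ∏ s : Fin n, φ ((d s : ℕ)) := Finset.prod_nonneg fun s _ => hφ0 _
        positivity
    have step2 : ∑ i ∈ Finset.range (dbar+1), φ i = v * w + (1 - v) := by
      have h2 := Finset.sum_filter_add_sum_filter_not (Finset.range (dbar+1)) B f
      simp only [hφ, mul_ite, mul_one]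
      rw [Finset.sum_ite, ← Finset.sum_mul, ← hv]
      have : ∑ i ∈ (Finset.range (dbar+1)).filter (fun i => ¬ B i), f i = 1 - v := by
        rw [hv]; linarith [hf.2.2, h2]
      rw [this]
    have hvw : v * w + (1 - v) = (1 - v) / (1 - u) := by
      rw [hw]; field_simp; ring
    have key : w ^ (-(u * n)) * ((1 - v) / (1 - u)) ^ n ≤ Real.exp (-κ * n) := by
      have ha : (0:ℝ) < (1 - v) / (1 - u) := by positivity
      have hlog : Real.log ((1-v)/(1-u)) - u * Real.log w = -(klB u v) := by
        unfold klB
        rw [hw, Real.log_div h1v.ne' h1u.ne', Real.log_div hu0.ne' hv0'.ne',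
          Real.log_div h1u.ne' h1v.ne',
          Real.log_div (by positivity) (by positivity),
          Real.log_mul hu0.ne' h1v.ne', Real.log_mul hv0'.ne' h1u.ne']
        ring
      rw [Real.rpow_def_of_pos hw0]
      rw [show ((1 - v) / (1 - u)) ^ n = Real.exp ((n : ℝ) * Real.log ((1-v)/(1-u))) by
        rw [← Real.exp_log ha, ← Real.exp_nat_mul, Real.log_exp]]
      rw [← Real.exp_add, Real.exp_le_exp]
      have : Real.log w * -(u * ↑n) + ↑n * Real.log ((1 - v) / (1 - u))
          = (n : ℝ) * (Real.log ((1-v)/(1-u)) - u * Real.log w) := by ring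
      rw [this, hlog]
      nlinarith [hκ']
    calc prob dbar n f (fun D => u * n ≤ ∑ s : Fin n, if B (D s) then (1:ℝ) else 0)
        ≤ w ^ (-(u * n)) * (∑ i ∈ Finset.range (dbar+1), φ i) ^ n := step1
      _ = w ^ (-(u * n)) * ((1 - v) / (1 - u)) ^ n := by rw [step2, hvw]
      _ ≤ Real.exp (-κ * n) := key

lemma klB_flip' (u v : ℝ) : klB (1-u) (1-v) = klB u v := by
  unfold klB; ring_nf

lemma cdf_emp' (n : ℕ) (D : Fin n → ℕ) (k : ℕ) :
    cdf (emp n D) k = (∑ s : Fin n, if D s ≤ k then (1:ℝ) else 0) / n := by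
  unfold cdf emp
  rw [← Finset.sum_div]
  congr 1
  rw [Finset.sum_comm]
  apply Finset.sum_congr rfl
  intro s _
  rw [Finset.sum_ite_eq (Finset.range (k+1)) (D s) (fun _ => (1:ℝ))]
  simp [Nat.lt_succ_iff]

lemma cdf_emp_mono' (n : ℕ) (D : Fin n → ℕ) {j k : ℕ} (hjk : j ≤ k) :
    cdf (emp n D) j ≤ cdf (emp n D) k := by
  apply Finset.sum_le_sum_of_subset_of_nonneg
  · exact Finset.range_subset_range.mpr (by omega)
  · intro i _ _
    unfold emp
    positivity

lemma eventA' (dbar n : ℕ) (hn : 1 ≤ n) (β : ℝ) (hb1 : β ≤ 1)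
    (ys : ℕ) (d : Fin n → Fin (dbar+1))
    (hE : yhat dbar β n (fun s => ((d s : ℕ))) + 1 ≤ ys) :
    β * n ≤ ∑ s : Fin n, if ((d s : ℕ)) < ys then (1:ℝ) else 0 := by
  set D : Fin n → ℕ := fun s => ((d s : ℕ)) with hD
  have hn0 : (0:ℝ) < n := by exact_mod_cast hn
  have hdbar : dbar ∈ {k : ℕ | k ≤ dbar ∧ β ≤ cdf (emp n D) k} := by
    constructor
    · exact le_rfl
    · rw [cdf_emp']
      have : (∑ s : Fin n, if D s ≤ dbar then (1:ℝ) else 0) = n := by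
        rw [Finset.sum_congr rfl fun s _ => if_pos (Nat.lt_succ_iff.mp (d s).isLt)]
        simp
      rw [this, div_self hn0.ne']
      exact hb1
  have hmem := Nat.sInf_mem (⟨dbar, hdbar⟩ : Set.Nonempty {k : ℕ | k ≤ dbar ∧ β ≤ cdf (emp n D) k})
  have hyb : β ≤ cdf (emp n D) (yhat dbar β n D) := hmem.2
  have hys1 : 1 ≤ ys := by omega
  have hle : yhat dbar β n D ≤ ys - 1 := by omega
  have h2 : β ≤ cdf (emp n D) (ys - 1) := le_trans hyb (cdf_emp_mono' n D hle)
  rw [cdf_emp', le_div_iff₀ hn0] at h2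
  calc β * n ≤ ∑ s : Fin n, if D s ≤ ys - 1 then (1:ℝ) else 0 := h2
    _ = ∑ s : Fin n, if D s < ys then (1:ℝ) else 0 := by
        apply Finset.sum_congr rfl
        intro s _
        have : (D s ≤ ys - 1) ↔ (D s < ys) := by omega
        simp [this]

lemma eventB' (dbar n : ℕ) (hn : 1 ≤ n) (β : ℝ)
    (ys : ℕ) (hysd : ys ≤ dbar) (d : Fin n → Fin (dbar+1))
    (hE : ys + 1 ≤ yhat dbar β n (fun s => ((d s : ℕ)))) :
    (1 - β) * n ≤ ∑ s : Fin n, if ys < ((d s : ℕ)) then (1:ℝ) else 0 := by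
  set D : Fin n → ℕ := fun s => ((d s : ℕ)) with hD
  have hn0 : (0:ℝ) < n := by exact_mod_cast hn
  have hEy : ys < sInf {k : ℕ | k ≤ dbar ∧ β ≤ cdf (emp n D) k} := by
    have : yhat dbar β n D = sInf {k : ℕ | k ≤ dbar ∧ β ≤ cdf (emp n D) k} := rfl
    omega
  have hnot : ys ∉ {k : ℕ | k ≤ dbar ∧ β ≤ cdf (emp n D) k} :=
    Nat.notMem_of_lt_sInf hEy
  have hlt : cdf (emp n D) ys < β := by
    by_contra hc
    exact hnot ⟨hysd, not_lt.mp hc⟩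
  rw [cdf_emp', div_lt_iff₀ hn0] at hlt
  have hterm : ∀ s : Fin n, (if ys < D s then (1:ℝ) else 0)
      = 1 - (if D s ≤ ys then (1:ℝ) else 0) := by
    intro s
    rcases Nat.lt_or_ge ys (D s) with h | h
    · simp [h, Nat.not_le.mpr h]
    · simp [Nat.not_lt.mpr h, h]
  have hsplit : (∑ s : Fin n, if ys < D s then (1:ℝ) else 0)
      = n - ∑ s : Fin n, if D s ≤ ys then (1:ℝ) else 0 := by
    rw [Finset.sum_congr rfl fun s _ => hterm s, Finset.sum_sub_distrib]
    simp
  rw [hsplit]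
  nlinarith [hlt]

end AuxChernoff

theorem stmt5 (dbar : ℕ) (hdbar : 1 ≤ dbar) (h b : ℝ) (hh : 0 < h) (hb : 0 < b)
    (β : ℝ) (hβ : β = b / (h + b)) (f : ℕ → ℝ) (hf : IsDist dbar f)
    (hα : cdfm1 f (ystar dbar β f) < β) (hγ : β < cdf f (ystar dbar β f))
    (κ : ℝ) (hκpos : 0 < κ)
    (hκα : cdfm1 f (ystar dbar β f) = 0 ∨ κ ≤ klB β (cdfm1 f (ystar dbar β f)))
    (hκγ : cdf f (ystar dbar β f) = 1 ∨ κ ≤ klB β (cdf f (ystar dbar β f)))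
    (t : ℕ) (ht : 2 ≤ t) :
    prob dbar (t - 1) f (fun D => yhat dbar β (t - 1) D + 1 ≤ ystar dbar β f)
        ≤ min ((t : ℝ) ^ 2 * Real.exp (-κ * ((t : ℝ) - 1))) 1 ∧
      prob dbar (t - 1) f (fun D => ystar dbar β f + 1 ≤ yhat dbar β (t - 1) D)
        ≤ min ((t : ℝ) ^ 2 * Real.exp (-κ * ((t : ℝ) - 1))) 1 := by
  classical
  have hb0 : (0:ℝ) < β := by rw [hβ]; positivity
  have hb1 : β < 1 := by
    rw [hβ, div_lt_one (by linarith)]; linarith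
  set ys := ystar dbar β f with hys
  have hysd : ys ≤ dbar := by
    apply Nat.sInf_le
    constructor
    · exact le_rfl
    · show β ≤ cdf f dbar
      unfold cdf
      rw [hf.2.2]
      linarith
  set n := t - 1 with hn'
  have hn : 1 ≤ n := by omega
  have hcast : ((n : ℕ) : ℝ) = (t : ℝ) - 1 := by
    rw [hn']
    push_cast [Nat.cast_sub (by omega : 1 ≤ t)]
    ring
  have hexp : Real.exp (-κ * (n:ℝ)) ≤ (t : ℝ) ^ 2 * Real.exp (-κ * ((t:ℝ) - 1)) := by
    rw [hcast]
    have ht1 : (1:ℝ) ≤ (t:ℝ) := by exact_mod_cast (by omega : 1 ≤ t)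
    have h2 : (1:ℝ) ≤ (t:ℝ)^2 := by nlinarith
    exact le_mul_of_one_le_left (Real.exp_pos _).le h2
  constructor
  · apply le_min _ (prob_le_one' dbar n f hf _)
    calc prob dbar n f (fun D => yhat dbar β n D + 1 ≤ ys)
        ≤ prob dbar n f (fun D => β * (n:ℝ) ≤ ∑ s : Fin n, if (D s) < ys then (1:ℝ) else 0) := by
          apply prob_mono' dbar n f hf
          intro d hE
          exact eventA' dbar n hn β hb1.le ys d hE
      _ ≤ Real.exp (-κ * (n:ℝ)) := by
          apply chernoff' dbar n hn f hf (fun i => i < ys) β hb0 hb1 (cdfm1 f ys) _ hα κ hκα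
          have hfil : (Finset.range (dbar+1)).filter (fun i => i < ys) = Finset.range ys := by
            ext i
            simp only [Finset.mem_filter, Finset.mem_range]
            omega
          unfold cdfm1
          rw [hfil]
      _ ≤ (t : ℝ) ^ 2 * Real.exp (-κ * ((t:ℝ) - 1)) := hexp
  · apply le_min _ (prob_le_one' dbar n f hf _)
    have hfil : ∑ i ∈ (Finset.range (dbar+1)).filter (fun i => ys < i), f i = 1 - cdf f ys := by
      have h2 := Finset.sum_filter_add_sum_filter_not (Finset.range (dbar+1)) (fun i => ys < i) f
      have hnotf : (Finset.range (dbar+1)).filter (fun i => ¬ ys < i) = Finset.range (ys+1) := by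
        ext i
        simp only [Finset.mem_filter, Finset.mem_range]
        omega
      rw [hnotf] at h2
      have : cdf f ys = ∑ i ∈ Finset.range (ys+1), f i := rfl
      rw [this]
      linarith [hf.2.2]
    calc prob dbar n f (fun D => ys + 1 ≤ yhat dbar β n D)
        ≤ prob dbar n f (fun D => (1-β) * (n:ℝ) ≤ ∑ s : Fin n, if ys < (D s) then (1:ℝ) else 0) := by
          apply prob_mono' dbar n f hf
          intro d hE
          exact eventB' dbar n hn β ys hysd d hE
      _ ≤ Real.exp (-κ * (n:ℝ)) := by
          apply chernoff' dbar n hn f hf (fun i => ys < i) (1-β) (by linarith) (by linarith)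
            (1 - cdf f ys) hfil.symm (by linarith) κ
          rcases hκγ with h | h
          · left; rw [h]; ring
          · right
            have : klB (1-β) (1 - cdf f ys) = klB β (cdf f ys) := klB_flip' β (cdf f ys)
            rw [this]
            exact h
      _ ≤ (t : ℝ) ^ 2 * Real.exp (-κ * ((t:ℝ) - 1)) := hexp
end
end

section
/- (Proposition 3.) For every ε > 0 there exist positive constants A_ε and B_ε, depending only on ε, h, b, and d̄, such that for every f ∈ Δ and every T ≥ 1, R^{T1}_f(y) ≤ A_ε + B_ε·T^{1/2+ε}. -/
open Finset

noncomputable section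

section Aux

variable {dbar : ℕ} {h b : ℝ} {f : ℕ → ℝ}

lemma cdf_nonneg (hf : ∀ d, 0 ≤ f d) (d : ℕ) : 0 ≤ cdf f d :=
  Finset.sum_nonneg fun i _ => hf i

lemma cdf_mono (hf : ∀ d, 0 ≤ f d) : Monotone (cdf f) := by
  intro i j hij
  exact Finset.sum_le_sum_of_subset_of_nonneg
    (Finset.range_subset_range.2 (by omega)) (fun k _ _ => hf k)

lemma cdf_top (hf : IsDist dbar f) : cdf f dbar = 1 := hf.2.2

lemma cdf_le_one (hf : IsDist dbar f) (d : ℕ) (hd : d ≤ dbar) : cdf f d ≤ 1 := by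
  rw [← cdf_top hf]; exact cdf_mono hf.1 hd

lemma sum_ite_le (y : ℕ) (hy : y ≤ dbar) (g : ℕ → ℝ) :
    ∑ d ∈ Finset.range (dbar + 1), (if d ≤ y then g d else 0)
      = ∑ d ∈ Finset.range (y + 1), g d := by
  have hsub : Finset.range (y+1) ⊆ Finset.range (dbar+1) := Finset.range_subset_range.2 (by omega)
  rw [← Finset.sum_subset hsub (fun d _ hd => if_neg (by
    simp only [Finset.mem_range, Nat.lt_succ_iff] at hd; omega))]
  exact Finset.sum_congr rfl fun d hd => if_pos (by
    simp only [Finset.mem_range, Nat.lt_succ_iff] at hd; omega)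

lemma Q_diff (hf : IsDist dbar f) (y : ℕ) (hy : y ≤ dbar) :
    Q h b dbar f (y + 1) - Q h b dbar f y = (h + b) * cdf f y - b := by
  have key : ∀ d : ℕ,
      f d * (h * max ((y:ℝ) + 1 - d) 0 + b * max ((d:ℝ) - (y+1)) 0)
      - f d * (h * max ((y:ℝ) - d) 0 + b * max ((d:ℝ) - y) 0)
      = (if d ≤ y then f d * (h + b) else 0) - f d * b := by
    intro d
    by_cases hdy : d ≤ y
    · have : (d:ℝ) ≤ y := by exact_mod_cast hdy
      rw [if_pos hdy, max_eq_left (by linarith : (0:ℝ) ≤ (y:ℝ) + 1 - d),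
        max_eq_right (by linarith : (d:ℝ) - (y+1) ≤ 0),
        max_eq_left (by linarith : (0:ℝ) ≤ (y:ℝ) - d),
        max_eq_right (by linarith : (d:ℝ) - y ≤ 0)]
      ring
    · have : (y:ℝ) + 1 ≤ d := by
        have : y + 1 ≤ d := by omega
        exact_mod_cast this
      rw [if_neg hdy, max_eq_right (by linarith : (y:ℝ) + 1 - d ≤ 0),
        max_eq_left (by linarith : (0:ℝ) ≤ (d:ℝ) - (y+1)),
        max_eq_right (by linarith : (y:ℝ) - d ≤ 0),
        max_eq_left (by linarith : (0:ℝ) ≤ (d:ℝ) - y)]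
      ring
  have : Q h b dbar f (y + 1) - Q h b dbar f y
      = ∑ d ∈ Finset.range (dbar + 1), ((if d ≤ y then f d * (h + b) else 0) - f d * b) := by
    rw [Q, Q, ← Finset.sum_sub_distrib]
    refine Finset.sum_congr rfl fun d _ => ?_
    have := key d
    push_cast at this ⊢
    linarith
  rw [this, Finset.sum_sub_distrib, sum_ite_le y hy, ← Finset.sum_mul, ← Finset.sum_mul,
    hf.2.2, cdf]
  ring

lemma Q_telescope (hf : IsDist dbar f) (y' y : ℕ) (hy' : y' ≤ y) (hy : y ≤ dbar) :
    Q h b dbar f y - Q h b dbar f y'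
      = ∑ d ∈ Finset.Ico y' y, ((h + b) * cdf f d - b) := by
  induction y with
  | zero => interval_cases y'; simp
  | succ m ih =>
    rcases Nat.lt_or_ge y' (m+1) with hlt | hge
    · have hy'm : y' ≤ m := by omega
      have hmd : m ≤ dbar := by omega
      rw [Finset.sum_Ico_succ_top hy'm, ← ih hy'm hmd, ← Q_diff hf m hmd]
      ring
    · have : y' = m + 1 := by omega
      subst this; simp

lemma Qstar_le (y : ℕ) (hy : y ≤ dbar) : Qstar h b dbar f ≤ Q h b dbar f y :=
  Finset.inf'_le _ (Finset.mem_range.2 (by omega))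

lemma Qstar_eq : ∃ y ≤ dbar, Qstar h b dbar f = Q h b dbar f y := by
  obtain ⟨y, hy, hQ⟩ := Finset.exists_mem_eq_inf' (Finset.nonempty_range_add_one)
    (Q h b dbar f)
  exact ⟨y, by simpa [Nat.lt_succ_iff] using Finset.mem_range.1 hy, hQ⟩

lemma Q_nonneg (hh : 0 < h) (hb : 0 < b) (hf : ∀ d, 0 ≤ f d) (y : ℕ) :
    0 ≤ Q h b dbar f y := by
  refine Finset.sum_nonneg fun d _ => mul_nonneg (hf d) ?_
  have := le_max_right ((y:ℝ) - d) 0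
  positivity

lemma Qstar_nonneg (hh : 0 < h) (hb : 0 < b) (hf : ∀ d, 0 ≤ f d) :
    0 ≤ Qstar h b dbar f :=
  Finset.le_inf' _ _ fun y _ => Q_nonneg hh hb hf y

/-- The key deterministic bound. -/
lemma det_bound (hh : 0 < h) (hb : 0 < b) {β : ℝ} (hβ : β * (h + b) = b)
    (hf : IsDist dbar f) (g : ℕ → ℝ) (hg : ∀ k, 0 ≤ g k) (hgd : β ≤ cdf g dbar) :
    Q h b dbar f (ystar dbar β g) ≤ Qstar h b dbar f
      + (h + b) * dbar * ∑ k ∈ Finset.range (dbar + 1), |cdf g k - cdf f k| := by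
  set δ : ℝ := ∑ k ∈ Finset.range (dbar + 1), |cdf g k - cdf f k| with hδ
  have hδ0 : 0 ≤ δ := Finset.sum_nonneg fun k _ => abs_nonneg _
  have hdev : ∀ k ≤ dbar, |cdf g k - cdf f k| ≤ δ := fun k hk =>
    Finset.single_le_sum (f := fun k => |cdf g k - cdf f k|)
      (fun i _ => abs_nonneg _) (Finset.mem_range.2 (by omega))
  set yh := ystar dbar β g with hyh
  have hmem : yh ∈ {d : ℕ | d ≤ dbar ∧ β ≤ cdf g d} :=
    Nat.sInf_mem ⟨dbar, le_refl _, hgd⟩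
  have hyhd : yh ≤ dbar := hmem.1
  have hlt : ∀ d < yh, ¬ β ≤ cdf g d := by
    intro d hd hc
    exact Nat.notMem_of_lt_sInf hd ⟨by omega, hc⟩
  obtain ⟨ys, hysd, hys⟩ := Qstar_eq (h := h) (b := b) (f := f) (dbar := dbar)
  rw [hys]
  rcases le_or_gt ys yh with hcase | hcase
  · -- yh ≥ ys
    rw [← sub_le_iff_le_add']
    rw [Q_telescope hf ys yh hcase hyhd]
    calc ∑ d ∈ Finset.Ico ys yh, ((h + b) * cdf f d - b)
        ≤ ∑ d ∈ Finset.Ico ys yh, (h + b) * δ := by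
          refine Finset.sum_le_sum fun d hd => ?_
          obtain ⟨hd1, hd2⟩ := Finset.mem_Ico.1 hd
          have hddbar : d ≤ dbar := by omega
          have h1 : cdf g d < β := lt_of_not_ge (hlt d hd2)
          have h2 : cdf f d ≤ cdf g d + δ := by
            have := hdev d hddbar
            have := abs_le.1 this
            linarith [this.1]
          nlinarith [add_pos hh hb]
      _ ≤ (h + b) * dbar * δ := by
          rw [Finset.sum_const, Nat.card_Ico, nsmul_eq_mul]
          have : ((yh - ys : ℕ) : ℝ) ≤ (dbar : ℝ) := by
            exact_mod_cast (by omega : yh - ys ≤ dbar)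
          nlinarith [mul_nonneg (le_of_lt (add_pos hh hb)) hδ0]
  · -- yh < ys
    rw [← sub_le_iff_le_add']
    have := Q_telescope (h := h) (b := b) hf yh ys (le_of_lt hcase) hysd
    have heq : Q h b dbar f yh - Q h b dbar f ys
        = ∑ d ∈ Finset.Ico yh ys, (b - (h + b) * cdf f d) := by
      rw [← neg_sub, this, ← Finset.sum_neg_distrib]
      exact Finset.sum_congr rfl fun d _ => by ring
    rw [heq]
    calc ∑ d ∈ Finset.Ico yh ys, (b - (h + b) * cdf f d)
        ≤ ∑ d ∈ Finset.Ico yh ys, (h + b) * δ := by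
          refine Finset.sum_le_sum fun d hd => ?_
          obtain ⟨hd1, hd2⟩ := Finset.mem_Ico.1 hd
          have hddbar : d ≤ dbar := by omega
          have h1 : β ≤ cdf g d := le_trans hmem.2 (cdf_mono hg hd1)
          have h2 : cdf g d - δ ≤ cdf f d := by
            have := abs_le.1 (hdev d hddbar)
            linarith [this.2]
          nlinarith [add_pos hh hb]
      _ ≤ (h + b) * dbar * δ := by
          rw [Finset.sum_const, Nat.card_Ico, nsmul_eq_mul]
          have : ((ys - yh : ℕ) : ℝ) ≤ (dbar : ℝ) := by
            exact_mod_cast (by omega : ys - yh ≤ dbar)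
          nlinarith [mul_nonneg (le_of_lt (add_pos hh hb)) hδ0]

lemma expec_prod (hf : IsDist dbar f) (n : ℕ) (Φ : Fin n → ℕ → ℝ) :
    expec dbar n f (fun d => ∏ s, Φ s (d s))
      = ∏ s : Fin n, ∑ j ∈ Finset.range (dbar + 1), f j * Φ s j := by
  rw [expec]
  have : ∀ s : Fin n, ∑ j ∈ Finset.range (dbar + 1), f j * Φ s j
      = ∑ j : Fin (dbar + 1), f j * Φ s j := fun s =>
    (Fin.sum_univ_eq_sum_range (fun j => f j * Φ s j) (dbar + 1)).symm
  simp only [this]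
  rw [Fintype.prod_sum (f := fun (s : Fin n) (j : Fin (dbar+1)) => f j * Φ s j)]
  exact Finset.sum_congr rfl fun d _ => by rw [← Finset.prod_mul_distrib]

lemma expec_one (hf : IsDist dbar f) (n : ℕ) :
    expec dbar n f (fun _ => (1 : ℝ)) = 1 := by
  have := expec_prod hf n (fun _ _ => (1 : ℝ))
  simp only [Finset.prod_const_one] at this
  rw [this]
  apply Finset.prod_eq_one
  intro s _
  simpa using hf.2.2

lemma expec_mono (hf : IsDist dbar f) (n : ℕ) {g₁ g₂ : (Fin n → ℕ) → ℝ}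
    (hg : ∀ d : Fin n → Fin (dbar + 1), g₁ (fun s => (d s : ℕ)) ≤ g₂ (fun s => (d s : ℕ))) :
    expec dbar n f g₁ ≤ expec dbar n f g₂ := by
  refine Finset.sum_le_sum fun d _ => ?_
  exact mul_le_mul_of_nonneg_left (hg d) (Finset.prod_nonneg fun s _ => hf.1 _)

lemma expec_add (n : ℕ) (g₁ g₂ : (Fin n → ℕ) → ℝ) :
    expec dbar n f (fun d => g₁ d + g₂ d) = expec dbar n f g₁ + expec dbar n f g₂ := by
  rw [expec, expec, expec, ← Finset.sum_add_distrib]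
  exact Finset.sum_congr rfl fun d _ => by ring

lemma expec_const_mul (n : ℕ) (c : ℝ) (g : (Fin n → ℕ) → ℝ) :
    expec dbar n f (fun d => c * g d) = c * expec dbar n f g := by
  rw [expec, expec, Finset.mul_sum]
  exact Finset.sum_congr rfl fun d _ => by ring

lemma expec_const (hf : IsDist dbar f) (n : ℕ) (c : ℝ) :
    expec dbar n f (fun _ => c) = c := by
  have := expec_const_mul (dbar := dbar) (f := f) n c (fun _ => (1 : ℝ))
  simpa [expec_one hf n] using this

lemma expec_sum (n : ℕ) {ι : Type*} (s : Finset ι) (g : ι → (Fin n → ℕ) → ℝ) :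
    expec dbar n f (fun d => ∑ i ∈ s, g i d) = ∑ i ∈ s, expec dbar n f (g i) := by
  classical
  induction s using Finset.induction with
  | empty => simp [expec]
  | insert _ _ hx ih =>
    rw [Finset.sum_insert hx, ← ih, ← expec_add]
    simp only [Finset.sum_insert hx]

lemma emp_cdf (n : ℕ) (d : Fin n → ℕ) (k : ℕ) :
    cdf (emp n d) k = (∑ s : Fin n, if d s ≤ k then (1:ℝ) else 0) / n := by
  rw [cdf]
  simp only [emp, ← Finset.sum_div]
  congr 1
  rw [Finset.sum_comm]
  refine Finset.sum_congr rfl fun s _ => ?_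
  rw [Finset.sum_ite_eq (Finset.range (k+1)) (d s) (fun _ => (1:ℝ))]
  simp [Nat.lt_succ_iff]

lemma var_bound (hf : IsDist dbar f) (n : ℕ) (hn : 1 ≤ n) (k : ℕ) (hk : k ≤ dbar) :
    expec dbar n f (fun d => (cdf (emp n d) k - cdf f k)^2) ≤ 1 / (4 * n) := by
  set p : ℝ := cdf f k with hp
  set a : ℕ → ℝ := fun j => (if j ≤ k then 1 else 0) - p with ha
  have hnR : (0:ℝ) < n := by exact_mod_cast hn
  have hsum_a : ∑ j ∈ Finset.range (dbar + 1), f j * a j = 0 := by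
    have : ∀ j, f j * a j = (if j ≤ k then f j else 0) - p * f j := by
      intro j; by_cases hj : j ≤ k <;> simp [ha, hj] <;> ring
    simp only [this]
    rw [Finset.sum_sub_distrib, sum_ite_le k hk f, ← Finset.mul_sum, hf.2.2, hp, cdf]
    ring
  have hsq : ∑ j ∈ Finset.range (dbar + 1), f j * (a j * a j) = p * (1 - p) := by
    have : ∀ j, f j * (a j * a j)
        = (1 - 2*p) * (if j ≤ k then f j else 0) + p^2 * f j := by
      intro j; by_cases hj : j ≤ k <;> simp [ha, hj] <;> ring
    simp only [this]
    rw [Finset.sum_add_distrib, ← Finset.mul_sum, ← Finset.mul_sum,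
      sum_ite_le k hk f, hf.2.2, hp, cdf]
    ring
  have hp0 : 0 ≤ p := cdf_nonneg hf.1 k
  have hp1 : p ≤ 1 := cdf_le_one hf k hk
  -- the pairwise expectations
  have pair : ∀ s t : Fin n, expec dbar n f (fun d => a (d s) * a (d t))
      = if s = t then p * (1 - p) else 0 := by
    intro s t
    have h1 : expec dbar n f (fun d => a (d s) * a (d t))
        = expec dbar n f (fun d => ∏ u : Fin n,
            ((if u = s then a (d u) else 1) * (if u = t then a (d u) else 1))) := by
      congr 1
      funext d
      rw [Finset.prod_mul_distrib]
      simp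
    rw [h1, expec_prod hf n
      (fun (u : Fin n) (x : ℕ) => (if u = s then a x else 1) * (if u = t then a x else 1))]
    by_cases hst : s = t
    · subst hst
      rw [if_pos rfl]
      rw [Finset.prod_eq_single s]
      · simpa using hsq
      · intro u _ hu
        simp only [if_neg hu, one_mul]
        simpa using hf.2.2
      · simp
    · rw [if_neg hst]
      apply Finset.prod_eq_zero (Finset.mem_univ s)
      simp only [if_pos rfl, if_neg hst, mul_one]
      exact hsum_a
  have hsq_exp : expec dbar n f (fun d => (∑ s : Fin n, a (d s))^2)
      = n * (p * (1 - p)) := by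
    have hrw : (fun d : Fin n → ℕ => (∑ s : Fin n, a (d s))^2)
        = fun d => ∑ s : Fin n, ∑ t : Fin n, a (d s) * a (d t) := by
      funext d; rw [sq, Finset.sum_mul_sum]
    rw [hrw, expec_sum]
    have : ∀ s : Fin n, expec dbar n f (fun d => ∑ t : Fin n, a (d s) * a (d t))
        = p * (1 - p) := by
      intro s
      rw [expec_sum n Finset.univ (fun t d => a (d s) * a (d t))]
      simp only [pair]
      simp
    rw [Finset.sum_congr rfl fun s _ => this s]
    simp [mul_comm]
  have hpt : ∀ d : Fin n → ℕ, (cdf (emp n d) k - p)^2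
      = (1 / (n:ℝ)^2) * (∑ s : Fin n, a (d s))^2 := by
    intro d
    rw [emp_cdf]
    have : ∑ s : Fin n, a (d s)
        = (∑ s : Fin n, if d s ≤ k then (1:ℝ) else 0) - n * p := by
      simp only [ha, Finset.sum_sub_distrib]
      simp [Finset.sum_const, mul_comm]
    rw [this]
    field_simp
  calc expec dbar n f (fun d => (cdf (emp n d) k - cdf f k)^2)
      = expec dbar n f (fun d => (1 / (n:ℝ)^2) * (∑ s : Fin n, a (d s))^2) := by
        congr 1; funext d; rw [← hpt d]
    _ = (1 / (n:ℝ)^2) * (n * (p * (1 - p))) := by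
        rw [expec_const_mul, hsq_exp]
    _ = (p * (1 - p)) / n := by field_simp
    _ ≤ 1 / (4 * n) := by
        rw [div_le_div_iff₀ hnR (by positivity)]
        nlinarith [sq_nonneg (p - 1/2)]

lemma absdev_bound (hf : IsDist dbar f) (n : ℕ) (hn : 1 ≤ n) (k : ℕ) (hk : k ≤ dbar) :
    expec dbar n f (fun d => |cdf (emp n d) k - cdf f k|) ≤ 1 / (2 * Real.sqrt n) := by
  have hnR : (0:ℝ) < n := by exact_mod_cast hn
  have hs : 0 < Real.sqrt n := Real.sqrt_pos.2 hnR
  have hss : Real.sqrt n * Real.sqrt n = n := Real.mul_self_sqrt (le_of_lt hnR)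
  have hpt : ∀ d : Fin n → ℕ, |cdf (emp n d) k - cdf f k|
      ≤ Real.sqrt n * (cdf (emp n d) k - cdf f k)^2 + 1/(4*Real.sqrt n) := by
    intro d
    set X : ℝ := cdf (emp n d) k - cdf f k
    have habs : |X|^2 = X^2 := sq_abs X
    have h1 : 0 ≤ 4 * (Real.sqrt n * Real.sqrt n) * X^2 - 4 * Real.sqrt n * |X| + 1 := by
      nlinarith [sq_nonneg (2 * Real.sqrt n * |X| - 1), habs]
    rw [← sub_nonneg]
    have heq : Real.sqrt n * X^2 + 1/(4*Real.sqrt n) - |X|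
        = (4 * (Real.sqrt n * Real.sqrt n) * X^2 - 4 * Real.sqrt n * |X| + 1)
          / (4 * Real.sqrt n) := by
      field_simp
      linear_combination 0 * hss
    rw [heq]
    exact div_nonneg h1 (by positivity)
  calc expec dbar n f (fun d => |cdf (emp n d) k - cdf f k|)
      ≤ expec dbar n f (fun d =>
          Real.sqrt n * (cdf (emp n d) k - cdf f k)^2 + 1/(4*Real.sqrt n)) :=
        expec_mono hf n fun d => hpt _
    _ = Real.sqrt n * expec dbar n f (fun d => (cdf (emp n d) k - cdf f k)^2)
          + 1/(4*Real.sqrt n) := by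
        rw [expec_add, expec_const_mul, expec_const hf]
    _ ≤ Real.sqrt n * (1/(4*n)) + 1/(4*Real.sqrt n) := by
        have := var_bound hf n hn k hk
        nlinarith [hs]
    _ = 1 / (2 * Real.sqrt n) := by
        have h2 : Real.sqrt n * (1/(4*(n:ℝ))) = 1/(4*Real.sqrt n) := by
          rw [mul_one_div, div_eq_div_iff (by positivity) (by positivity)]
          nlinarith [hss]
        rw [h2]
        ring

lemma step_bound (hh : 0 < h) (hb : 0 < b) {β : ℝ} (hβ : β * (h + b) = b)
    (hβ1 : β ≤ 1) (hf : IsDist dbar f) (n : ℕ) (hn : 1 ≤ n) :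
    expec dbar n f (fun d => Q h b dbar f (yhat dbar β n d))
      ≤ Qstar h b dbar f
        + (h + b) * dbar * ((dbar + 1) * (1 / (2 * Real.sqrt n))) := by
  have hnR : (0:ℝ) < n := by exact_mod_cast hn
  have hC : (0:ℝ) ≤ (h + b) * dbar :=
    mul_nonneg (le_of_lt (add_pos hh hb)) (Nat.cast_nonneg _)
  have key : ∀ d : Fin n → Fin (dbar+1),
      Q h b dbar f (yhat dbar β n (fun s => (d s : ℕ)))
        ≤ Qstar h b dbar f + (h + b) * dbar *
          ∑ k ∈ Finset.range (dbar+1),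
            |cdf (emp n (fun s => (d s : ℕ))) k - cdf f k| := by
    intro d
    apply det_bound hh hb hβ hf
    · intro j
      apply div_nonneg _ (Nat.cast_nonneg n)
      exact Finset.sum_nonneg fun s _ => by positivity
    · rw [emp_cdf]
      have hds : ∀ s : Fin n, ((d s : ℕ)) ≤ dbar := fun s => Nat.lt_succ_iff.1 (d s).2
      have h1 : (∑ s : Fin n, if ((d s : ℕ)) ≤ dbar then (1:ℝ) else 0) = n := by
        rw [Finset.sum_congr rfl fun s _ => if_pos (hds s)]
        simp
      rw [h1, div_self (ne_of_gt hnR)]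
      exact hβ1
  calc expec dbar n f (fun d => Q h b dbar f (yhat dbar β n d))
      ≤ expec dbar n f (fun d => Qstar h b dbar f + (h + b) * dbar *
          ∑ k ∈ Finset.range (dbar+1), |cdf (emp n d) k - cdf f k|) :=
        expec_mono hf n key
    _ = Qstar h b dbar f + (h + b) * dbar *
          ∑ k ∈ Finset.range (dbar+1),
            expec dbar n f (fun d => |cdf (emp n d) k - cdf f k|) := by
        rw [expec_add n (fun _ => Qstar h b dbar f)
          (fun d => (h + b) * dbar * ∑ k ∈ Finset.range (dbar+1),
            |cdf (emp n d) k - cdf f k|), expec_const hf,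
          expec_const_mul n ((h + b) * dbar)
            (fun d => ∑ k ∈ Finset.range (dbar+1), |cdf (emp n d) k - cdf f k|),
          expec_sum n (Finset.range (dbar+1))
            (fun k d => |cdf (emp n d) k - cdf f k|)]
    _ ≤ Qstar h b dbar f + (h + b) * dbar * ((dbar + 1) * (1 / (2 * Real.sqrt n))) := by
        gcongr
        calc ∑ k ∈ Finset.range (dbar+1),
              expec dbar n f (fun d => |cdf (emp n d) k - cdf f k|)
            ≤ ∑ k ∈ Finset.range (dbar+1), 1 / (2 * Real.sqrt n) := by
              refine Finset.sum_le_sum fun k hk => ?_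
              exact absdev_bound hf n hn k (by
                simpa [Nat.lt_succ_iff] using Finset.mem_range.1 hk)
          _ = (dbar + 1) * (1 / (2 * Real.sqrt n)) := by
              rw [Finset.sum_const, Finset.card_range, nsmul_eq_mul]
              push_cast
              ring

lemma expec_zero_obs (g : (Fin 0 → ℕ) → ℝ) :
    expec dbar 0 f g = g (fun s => (0 : ℕ)) := by
  rw [expec]
  rw [Finset.sum_eq_single (fun s : Fin 0 => (0 : Fin (dbar+1)))]
  · simp
  · intro d _ hd
    exact absurd (funext fun s : Fin 0 => absurd s.2 (Nat.not_lt_zero _)) hd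
  · intro hd
    exact absurd (Finset.mem_univ _) hd

lemma yhat_zero (β : ℝ) (hβ : 0 < β) (d : Fin 0 → ℕ) : yhat dbar β 0 d = 0 := by
  rw [yhat, ystar]
  convert Nat.sInf_empty
  rw [Set.eq_empty_iff_forall_notMem]
  rintro j ⟨hj1, hj2⟩
  have : cdf (emp 0 d) j = 0 := by
    rw [cdf]
    refine Finset.sum_eq_zero fun i _ => ?_
    simp [emp]
  rw [this] at hj2
  linarith

lemma Q_zero_le (hh : 0 < h) (hb : 0 < b) (hf : IsDist dbar f) :
    Q h b dbar f 0 ≤ b * dbar := by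
  have : ∀ d ∈ Finset.range (dbar + 1),
      f d * (h * max ((0:ℕ) - (d:ℝ)) 0 + b * max ((d:ℝ) - (0:ℕ)) 0)
        ≤ f d * (b * dbar) := by
    intro d hd
    have hd' : (d:ℝ) ≤ dbar := by
      exact_mod_cast Nat.lt_succ_iff.1 (Finset.mem_range.1 hd)
    have h1 : max ((0:ℕ) - (d:ℝ)) 0 = 0 := max_eq_right (by simp)
    have h2 : max ((d:ℝ) - (0:ℕ)) 0 = d := by
      rw [max_eq_left (by simp)]; simp
    rw [h1, h2]
    refine mul_le_mul_of_nonneg_left ?_ (hf.1 d)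
    nlinarith
  calc Q h b dbar f 0 ≤ ∑ d ∈ Finset.range (dbar + 1), f d * (b * dbar) :=
        Finset.sum_le_sum this
    _ = b * dbar := by rw [← Finset.sum_mul, hf.2.2, one_mul]

lemma sum_inv_sqrt (m : ℕ) :
    ∑ t ∈ Finset.Ico 1 (m + 1), 1 / Real.sqrt t ≤ 2 * Real.sqrt m := by
  induction m with
  | zero => simp
  | succ m ih =>
    rw [Finset.sum_Ico_succ_top (by omega)]
    have hu : (0:ℝ) ≤ Real.sqrt m := Real.sqrt_nonneg _
    have hv : 0 < Real.sqrt ((m:ℕ)+1 : ℕ) := Real.sqrt_pos.2 (by positivity)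
    have hu2 : Real.sqrt m * Real.sqrt m = m := Real.mul_self_sqrt (Nat.cast_nonneg _)
    have hv2 : Real.sqrt ((m:ℕ)+1 : ℕ) * Real.sqrt ((m:ℕ)+1 : ℕ) = (m:ℝ) + 1 := by
      rw [Real.mul_self_sqrt (Nat.cast_nonneg _)]
      push_cast; ring
    have hstep : 1 / Real.sqrt ((m:ℕ)+1 : ℕ)
        ≤ 2 * Real.sqrt ((m:ℕ)+1 : ℕ) - 2 * Real.sqrt m := by
      rw [div_le_iff₀ hv]
      nlinarith [sq_nonneg (Real.sqrt m - Real.sqrt ((m:ℕ)+1 : ℕ))]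
    have := add_le_add ih hstep
    push_cast at *
    linarith

end Aux

theorem stmt9 (dbar : ℕ) (hdbar : 1 ≤ dbar) (h b : ℝ) (hh : 0 < h) (hb : 0 < b)
    (β : ℝ) (hβ : β = b / (h + b)) (ε : ℝ) (hε : 0 < ε) :
    ∃ A B : ℝ, 0 < A ∧ 0 < B ∧ ∀ f : ℕ → ℝ, IsDist dbar f → ∀ T : ℕ, 1 ≤ T →
      regretT1 h b dbar β f T ≤ A + B * (T : ℝ) ^ ((1 : ℝ) / 2 + ε) := by
  have hdbarR : (1:ℝ) ≤ dbar := by exact_mod_cast hdbar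
  have hhb : (0:ℝ) < h + b := add_pos hh hb
  refine ⟨b * dbar + 1, (h + b) * dbar * (dbar + 1), by positivity, ?_, ?_⟩
  · apply mul_pos (mul_pos hhb (by linarith)) (by positivity)
  · intro f hf T hT
    have hβmul : β * (h + b) = b := by rw [hβ]; field_simp
    have hβpos : 0 < β := by rw [hβ]; positivity
    have hβ1 : β ≤ 1 := by rw [hβ, div_le_one hhb]; linarith
    have hTR : (1:ℝ) ≤ T := by exact_mod_cast hT
    obtain ⟨m, rfl⟩ : ∃ m, T = m + 1 := ⟨T - 1, by omega⟩
    have hreg : regretT1 h b dbar β f (m+1)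
        = ∑ t ∈ Finset.range (m+1),
            (expec dbar t f (fun d => Q h b dbar f (yhat dbar β t d))
              - Qstar h b dbar f) := by
      rw [regretT1, Finset.sum_sub_distrib, Finset.sum_const, Finset.card_range,
        nsmul_eq_mul]
    rw [hreg, Finset.range_eq_Ico, Finset.sum_eq_sum_Ico_succ_bot (by omega)]
    have t0 : expec dbar 0 f (fun d => Q h b dbar f (yhat dbar β 0 d))
        - Qstar h b dbar f ≤ b * dbar := by
      rw [expec_zero_obs]
      have h1 := Q_zero_le hh hb hf
      have h2 := Qstar_nonneg (f := f) (dbar := dbar) hh hb hf.1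
      rw [yhat_zero β hβpos]
      linarith
    have hB0 : (0:ℝ) ≤ (h + b) * dbar * (dbar + 1) := by positivity
    have trest : ∑ t ∈ Finset.Ico 1 (m+1),
        (expec dbar t f (fun d => Q h b dbar f (yhat dbar β t d))
          - Qstar h b dbar f)
        ≤ (h + b) * dbar * (dbar + 1) * Real.sqrt ((m:ℝ)+1) := by
      calc ∑ t ∈ Finset.Ico 1 (m+1),
            (expec dbar t f (fun d => Q h b dbar f (yhat dbar β t d))
              - Qstar h b dbar f)
          ≤ ∑ t ∈ Finset.Ico 1 (m+1),
              (h + b) * dbar * ((dbar + 1) * (1 / (2 * Real.sqrt t))) := by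
            refine Finset.sum_le_sum fun t ht => ?_
            have h1t : 1 ≤ t := (Finset.mem_Ico.1 ht).1
            have := step_bound hh hb hβmul hβ1 hf t h1t
            linarith
        _ = (h + b) * dbar * (dbar + 1) / 2
              * ∑ t ∈ Finset.Ico 1 (m+1), 1 / Real.sqrt t := by
            rw [Finset.mul_sum]
            exact Finset.sum_congr rfl fun t _ => by ring
        _ ≤ (h + b) * dbar * (dbar + 1) / 2 * (2 * Real.sqrt m) := by
            have := sum_inv_sqrt m
            have hC2 : (0:ℝ) ≤ (h + b) * dbar * (dbar + 1) / 2 := by positivity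
            exact mul_le_mul_of_nonneg_left this hC2
        _ ≤ (h + b) * dbar * (dbar + 1) * Real.sqrt ((m:ℝ)+1) := by
            have hsle : Real.sqrt m ≤ Real.sqrt ((m:ℝ)+1) :=
              Real.sqrt_le_sqrt (by linarith)
            nlinarith [Real.sqrt_nonneg (m:ℝ)]
    have hrp : Real.sqrt ((m:ℝ)+1) ≤ ((m:ℝ)+1) ^ ((1:ℝ)/2 + ε) := by
      rw [Real.sqrt_eq_rpow]
      push_cast at hTR
      exact Real.rpow_le_rpow_of_exponent_le (by linarith) (by linarith)
    have hfin : (h + b) * dbar * (dbar + 1) * Real.sqrt ((m:ℝ)+1)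
        ≤ (h + b) * dbar * (dbar + 1) * ((m:ℝ)+1) ^ ((1:ℝ)/2 + ε) :=
      mul_le_mul_of_nonneg_left hrp hB0
    push_cast
    push_cast at trest hfin
    linarith
end
end

section
/- (Empirical-quantile crossing bound.) Let d_1,...,d_{t−1} ∈ {0,...,d̄} and β ∈ (0,1). For s ≥ 2 let F̂_{s−1} be the cdf of the empirical distribution of d_1,...,d_{s−1} and ŷ_s = min{d ∈ {0,...,d̄} : F̂_{s−1}(d) ≥ β}. If 1 ≤ τ ≤ t − 2 and ŷ_t ≤ ŷ_{t−τ} − d_{t−τ} − d_{t−τ+1} − ⋯ − d_{t−1} − 1, then β ≤ F̂_{t−1}(ŷ_t) ≤ F̂_{t−1}(ŷ_{t−τ} − d_{t−τ} − ⋯ − d_{t−1} − 1) < β + τ/(t−τ). -/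
theorem stmt13 (dbar : ℕ) (hdbar : 1 ≤ dbar) (β : ℝ) (hβ0 : 0 < β) (hβ1 : β < 1)
    (t : ℕ) (d : ℕ → ℕ) (hd : ∀ s, 1 ≤ s → s ≤ t - 1 → d s ≤ dbar)
    (τ : ℕ) (hτ1 : 1 ≤ τ) (hτ2 : τ ≤ t - 2) :
    -- `Fhat m` is the empirical cdf of the sample `d 1, ..., d m`
    ∀ Fhat : ℕ → ℕ → ℝ,
      (Fhat = fun m k => (∑ s ∈ Finset.Icc 1 m, if d s ≤ k then (1 : ℝ) else 0) / (m : ℝ)) →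
    -- `yh s` is the empirical newsvendor quantile `ŷ_s`
    ∀ yh : ℕ → ℕ, (yh = fun s => sInf {k : ℕ | k ≤ dbar ∧ β ≤ Fhat (s - 1) k}) →
    -- `S = d_{t-τ} + d_{t-τ+1} + ⋯ + d_{t-1}`
    ∀ S : ℕ, S = ∑ r ∈ Finset.Icc (t - τ) (t - 1), d r →
    yh t + S + 1 ≤ yh (t - τ) →
      β ≤ Fhat (t - 1) (yh t) ∧
      Fhat (t - 1) (yh t) ≤ Fhat (t - 1) (yh (t - τ) - S - 1) ∧
      Fhat (t - 1) (yh (t - τ) - S - 1) < β + (τ : ℝ) / ((t : ℝ) - (τ : ℝ)) := by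
  intro Fhat hF yh hy S hS hle
  have ht : τ + 2 ≤ t := by omega
  -- monotonicity of Fhat in k
  have hmono : ∀ m j k : ℕ, j ≤ k → Fhat m j ≤ Fhat m k := by
    intro m j k hjk
    rw [hF]
    simp only
    rcases Nat.eq_zero_or_pos m with hm | hm
    · subst hm; simp
    · apply div_le_div_of_nonneg_right ?_ (by positivity)
      apply Finset.sum_le_sum
      intro r _
      by_cases h : d r ≤ j
      · rw [if_pos h, if_pos (h.trans hjk)]
      · rw [if_neg h]
        split <;> norm_num
  -- membership facts for yh
  have hset : ∀ s : ℕ, 2 ≤ s → s ≤ t → yh s ≤ dbar ∧ β ≤ Fhat (s - 1) (yh s) := by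
    intro s hs2 hst
    have hdb : dbar ∈ {k : ℕ | k ≤ dbar ∧ β ≤ Fhat (s - 1) k} := by
      refine ⟨le_refl _, ?_⟩
      rw [hF]
      simp only
      have h1 : ∀ r ∈ Finset.Icc 1 (s - 1), (if d r ≤ dbar then (1 : ℝ) else 0) = 1 := by
        intro r hr
        rw [Finset.mem_Icc] at hr
        exact if_pos (hd r hr.1 (by omega))
      have hsum : (∑ r ∈ Finset.Icc 1 (s - 1), if d r ≤ dbar then (1 : ℝ) else 0)
          = ((s - 1 : ℕ) : ℝ) := by
        rw [Finset.sum_congr rfl h1, Finset.sum_const, Nat.card_Icc, nsmul_eq_mul, mul_one,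
          Nat.add_sub_cancel]
      have hs1 : ((s - 1 : ℕ) : ℝ) ≠ 0 := by
        have : 1 ≤ s - 1 := by omega
        positivity
      rw [hsum, div_self hs1]
      exact hβ1.le
    have hmem : yh s ∈ {k : ℕ | k ≤ dbar ∧ β ≤ Fhat (s - 1) k} := by
      rw [hy]
      exact Nat.sInf_mem ⟨dbar, hdb⟩
    exact hmem
  -- below the quantile, Fhat is < β
  have hnot : ∀ s k : ℕ, k < yh s → k ≤ dbar → Fhat (s - 1) k < β := by
    intro s k hk hkd
    rw [hy] at hk
    have := Nat.notMem_of_lt_sInf hk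
    simp only [Set.mem_setOf_eq, not_and, not_le] at this
    exact this hkd
  obtain ⟨hyt_le, hyt_mem⟩ := hset t (by omega) le_rfl
  obtain ⟨hytτ_le, _⟩ := hset (t - τ) (by omega) (by omega)
  set K := yh (t - τ) - S - 1 with hK
  have hKS : K + S = yh (t - τ) - 1 := by omega
  have hKdbar : K ≤ dbar := by omega
  have hlt : Fhat (t - τ - 1) (K + S) < β := by
    apply hnot
    · omega
    · omega
  refine ⟨hyt_mem, hmono _ _ _ (by omega), ?_⟩
  -- counting bound
  have hτt : t - 1 = (t - τ - 1) + τ := by omega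
  have hsplit : (∑ r ∈ Finset.Icc 1 (t - 1), if d r ≤ K then (1 : ℝ) else 0)
      ≤ (∑ r ∈ Finset.Icc 1 (t - τ - 1), if d r ≤ K + S then (1 : ℝ) else 0) + (τ : ℝ) := by
    have e1 : Finset.Icc 1 (t - 1) = Finset.Ioc 0 (t - 1) := by
      rw [← Finset.Icc_add_one_left_eq_Ioc, zero_add]
    have e2 : Finset.Icc 1 (t - τ - 1) = Finset.Ioc 0 (t - τ - 1) := by
      rw [← Finset.Icc_add_one_left_eq_Ioc, zero_add]
    rw [e1, e2, ← Finset.sum_Ioc_consecutive _ (Nat.zero_le (t - τ - 1)) (by omega :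
      t - τ - 1 ≤ t - 1)]
    gcongr with r hr r hr
    · by_cases h : d r ≤ K
      · rw [if_pos h, if_pos (by omega)]
      · rw [if_neg h]
        split <;> norm_num
    · calc (∑ r ∈ Finset.Ioc (t - τ - 1) (t - 1), if d r ≤ K then (1 : ℝ) else 0)
          ≤ ∑ r ∈ Finset.Ioc (t - τ - 1) (t - 1), (1 : ℝ) := by
            apply Finset.sum_le_sum
            intro r _
            split <;> norm_num
        _ = (τ : ℝ) := by
            rw [Finset.sum_const, Nat.card_Ioc]
            simp
            omega
  -- turn hlt into a bound on the count
  set B : ℝ := ∑ r ∈ Finset.Icc 1 (t - τ - 1), if d r ≤ K + S then (1 : ℝ) else 0 with hB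
  set A : ℝ := ∑ r ∈ Finset.Icc 1 (t - 1), if d r ≤ K then (1 : ℝ) else 0 with hA
  have hBnn : 0 ≤ B := by
    apply Finset.sum_nonneg
    intro r _
    split <;> norm_num
  have hm2pos : (0 : ℝ) < ((t - τ - 1 : ℕ) : ℝ) := by
    have : 1 ≤ t - τ - 1 := by omega
    exact_mod_cast Nat.pos_of_ne_zero (by omega)
  have hm1pos : (0 : ℝ) < ((t - 1 : ℕ) : ℝ) := by
    exact_mod_cast Nat.pos_of_ne_zero (by omega)
  have hBlt : B < β * ((t - τ - 1 : ℕ) : ℝ) := by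
    rw [hF] at hlt
    simp only at hlt
    rw [div_lt_iff₀ hm2pos] at hlt
    exact hlt
  have hgoal : Fhat (t - 1) K = A / ((t - 1 : ℕ) : ℝ) := by
    rw [hF]
  rw [hgoal]
  have step1 : A / ((t - 1 : ℕ) : ℝ) ≤ (B + τ) / ((t - 1 : ℕ) : ℝ) :=
    div_le_div_of_nonneg_right hsplit hm1pos.le
  -- final arithmetic
  have hc1 : ((t - 1 : ℕ) : ℝ) = (t : ℝ) - 1 := by
    push_cast [Nat.cast_sub (by omega : 1 ≤ t)]; ring
  have hc2 : ((t - τ - 1 : ℕ) : ℝ) = (t : ℝ) - (τ : ℝ) - 1 := by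
    have : t - τ - 1 = t - (τ + 1) := by omega
    rw [this, Nat.cast_sub (by omega : τ + 1 ≤ t)]
    push_cast; ring
  have hτR : (1 : ℝ) ≤ (τ : ℝ) := by exact_mod_cast hτ1
  have htτR : (2 : ℝ) ≤ (t : ℝ) - (τ : ℝ) := by
    have : (τ + 2 : ℝ) ≤ (t : ℝ) := by exact_mod_cast ht
    linarith
  rw [hc1] at step1 hm1pos ⊢
  rw [hc2] at hBlt hm2pos
  refine lt_of_le_of_lt step1 ?_
  rw [div_lt_iff₀ hm1pos]
  have hq : (τ : ℝ) / ((t : ℝ) - (τ : ℝ)) * ((t : ℝ) - (τ : ℝ)) = (τ : ℝ) := by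
    field_simp
  have hq0 : (0 : ℝ) ≤ (τ : ℝ) / ((t : ℝ) - (τ : ℝ)) :=
    div_nonneg (by linarith) (by linarith)
  have hqT : (τ : ℝ) ≤ (τ : ℝ) / ((t : ℝ) - (τ : ℝ)) * ((t : ℝ) - 1) := by
    calc (τ : ℝ) = (τ : ℝ) / ((t : ℝ) - (τ : ℝ)) * ((t : ℝ) - (τ : ℝ)) := by
          field_simp
      _ ≤ _ := mul_le_mul_of_nonneg_left (by linarith) hq0
  nlinarith [mul_nonneg hβ0.le (by linarith : (0:ℝ) ≤ (τ:ℝ))]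
end
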